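/- arXiv:1702.06322 — 11 statements merged into one kernel-verified Lean document; each statement's English description precedes it below -/
import Mathlib

section
/- A signed graph G is balanced (every cycle has positive sign, where the sign of a cycle is the product of its edge signs) if and only if either all edges of G are positive, or the vertex set can be partitioned into two subsets such that every positive edge joins vertices in the same subset and every negative edge joins vertices in different subsets. -/
/-!
If every cycle is positive, then every closed walk is positive: the bypass of a walk is obtained
by repeatedly cutting off closed walks along paths, and each of these is either a cycle or an
edge traversed back and forth. Hence the sign of a walk depends only on its endpoints, and in
each connected component the sign of a walk from a fixed base vertex is a vertex labelling
`f : V → {±1}` with `σ(uv) = f(u) f(v)`; its level sets are the two parts. Conversely such a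
labelling makes the sign of every closed walk a square of `±1`.
-/

namespace SimpleGraph

variable {V : Type*} {G : SimpleGraph V}

namespace Walk

def sign (σ : V → V → ℤ) {u v : V} (p : G.Walk u v) : ℤ :=
  (p.darts.map fun d => σ d.fst d.snd).prod

variable {σ : V → V → ℤ} {u v w : V}

@[simp]
lemma sign_nil : (nil : G.Walk u u).sign σ = 1 := rfl

@[simp]
lemma sign_cons (h : G.Adj u v) (p : G.Walk v w) : (cons h p).sign σ = σ u v * p.sign σ := by
  simp [sign]

@[simp]
lemma sign_append (p : G.Walk u v) (q : G.Walk v w) :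
    (p.append q).sign σ = p.sign σ * q.sign σ := by
  simp [sign]

@[simp]
lemma sign_concat (p : G.Walk u v) (h : G.Adj v w) : (p.concat h).sign σ = p.sign σ * σ v w := by
  simp [sign, darts_concat]

@[simp]
lemma sign_copy {u' v' : V} (p : G.Walk u v) (hu : u = u') (hv : v = v') :
    (p.copy hu hv).sign σ = p.sign σ := by
  simp [sign]

lemma sign_reverse (hsymm : ∀ u v, σ u v = σ v u) (p : G.Walk u v) :
    p.reverse.sign σ = p.sign σ := by
  simp only [sign, darts_reverse, List.map_reverse, List.prod_reverse, List.map_map]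
  exact congrArg List.prod (List.map_congr_left fun d _ => hsymm _ _)

lemma sign_mul_self (hval : ∀ u v, G.Adj u v → σ u v = 1 ∨ σ u v = -1) (p : G.Walk u v) :
    p.sign σ * p.sign σ = 1 := by
  induction p with
  | nil => rfl
  | @cons a b _ h q ih =>
    have hab : σ a b * σ a b = 1 := mul_self_eq_one_iff.mpr (hval a b h)
    rw [sign_cons, mul_mul_mul_comm, hab, ih, one_mul]

end Walk

variable (G) in
def IsBalanced (σ : V → V → ℤ) : Prop :=
  ∀ (v : V) (c : G.Walk v v), c.IsCycle → c.sign σ = 1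

namespace Walk

variable {σ : V → V → ℤ} {u v : V}

lemma sign_cons_of_isPath (hsymm : ∀ u v, σ u v = σ v u)
    (hval : ∀ u v, G.Adj u v → σ u v = 1 ∨ σ u v = -1) (hbal : G.IsBalanced σ)
    (h : G.Adj u v) {p : G.Walk v u} (hp : p.IsPath) : (cons h p).sign σ = 1 := by
  by_cases hedge : s(u, v) ∈ p.edges
  · rw [Sym2.eq_swap] at hedge
    rw [hp.eq_adj_toWalk_of_mem_edges hedge]
    simp only [Adj.toWalk, sign_cons, sign_nil, mul_one, ← hsymm u v]
    exact mul_self_eq_one_iff.mpr (hval u v h)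
  · exact hbal u _ ((cons_isCycle_iff p h).mpr ⟨hp, hedge⟩)

lemma sign_bypass [DecidableEq V] (hsymm : ∀ u v, σ u v = σ v u)
    (hval : ∀ u v, G.Adj u v → σ u v = 1 ∨ σ u v = -1) (hbal : G.IsBalanced σ)
    (p : G.Walk u v) : p.bypass.sign σ = p.sign σ := by
  induction p with
  | nil => rfl
  | @cons a b _ h q ih =>
    simp only [bypass, sign_cons, ← ih]
    split_ifs with hs
    · -- the cut-off prefix of `q.bypass`, closed up by `h`, is a closed walk along a path
      have hloop := sign_cons_of_isPath hsymm hval hbal h (q.bypass_isPath.takeUntil hs)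
      rw [sign_cons] at hloop
      conv_rhs => rw [← q.bypass.take_spec hs, sign_append, ← mul_assoc, hloop, one_mul]
    · rw [sign_cons]

lemma sign_eq_sign_of_isBalanced (hsymm : ∀ u v, σ u v = σ v u)
    (hval : ∀ u v, G.Adj u v → σ u v = 1 ∨ σ u v = -1) (hbal : G.IsBalanced σ)
    (p q : G.Walk u v) : p.sign σ = q.sign σ := by
  classical
  have hpq : (p.append q.reverse).sign σ = 1 := by
    rw [← sign_bypass hsymm hval hbal, (isPath_iff_nil.mp (bypass_isPath _)).eq_nil, sign_nil]
  rw [sign_append, sign_reverse hsymm] at hpq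
  linear_combination q.sign σ * hpq - p.sign σ * sign_mul_self hval q

end Walk

variable (G) in
def IsBalancingSwitch (σ : V → V → ℤ) (f : V → ℤ) : Prop :=
  (∀ v, f v = 1 ∨ f v = -1) ∧ ∀ u v, G.Adj u v → σ u v = f u * f v

variable {σ : V → V → ℤ} {f : V → ℤ}

lemma Walk.sign_eq_of_isBalancingSwitch (hf : G.IsBalancingSwitch σ f) {u v : V}
    (p : G.Walk u v) : p.sign σ = f u * f v := by
  induction p with
  | nil => exact (mul_self_eq_one_iff.mpr (hf.1 _)).symm
  | @cons a b c h q ih =>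
    rw [sign_cons, ih, hf.2 a b h]
    linear_combination (f a * f c) * mul_self_eq_one_iff.mpr (hf.1 b)

lemma IsBalancingSwitch.eq_one_iff_of_adj (hf : G.IsBalancingSwitch σ f) {u v : V} (h : G.Adj u v) :
    (σ u v = 1 → (f u = 1 ↔ f v = 1)) ∧ (σ u v = -1 → ¬(f u = 1 ↔ f v = 1)) := by
  rw [hf.2 u v h]
  rcases hf.1 u with hu | hu <;> rcases hf.1 v with hv | hv <;> simp [hu, hv]

lemma exists_isBalancingSwitch_of_partition (hval : ∀ u v, G.Adj u v → σ u v = 1 ∨ σ u v = -1)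
    (S : Set V) (hS : ∀ u v, G.Adj u v →
      (σ u v = 1 → (u ∈ S ↔ v ∈ S)) ∧ (σ u v = -1 → ¬(u ∈ S ↔ v ∈ S))) :
    ∃ f, G.IsBalancingSwitch σ f := by
  classical
  refine ⟨fun v => if v ∈ S then 1 else -1, fun v => by by_cases hv : v ∈ S <;> simp [hv],
    fun u v h => ?_⟩
  obtain ⟨hpos, hneg⟩ := hS u v h
  rcases hval u v h with hσ | hσ <;> by_cases hu : u ∈ S <;> by_cases hv : v ∈ S <;> simp_all

lemma exists_isBalancingSwitch_of_sign_eq (hval : ∀ u v, G.Adj u v → σ u v = 1 ∨ σ u v = -1)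
    (hsign : ∀ (u v : V) (p q : G.Walk u v), p.sign σ = q.sign σ) :
    ∃ f, G.IsBalancingSwitch σ f := by
  have reach (v : V) : G.Reachable (G.connectedComponentMk v).out v :=
    ConnectedComponent.exact (Quot.out_eq _)
  refine ⟨fun v => (reach v).some.sign σ,
    fun v => mul_self_eq_one_iff.mp (Walk.sign_mul_self hval _), fun u v h => ?_⟩
  have hbase : (G.connectedComponentMk u).out = (G.connectedComponentMk v).out := by
    rw [ConnectedComponent.connectedComponentMk_eq_of_adj h]
  have hv := hsign _ _ (reach v).some (((reach u).some.copy hbase rfl).concat h)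
  rw [Walk.sign_concat, Walk.sign_copy] at hv
  simp only [hv]
  linear_combination (-σ u v) * Walk.sign_mul_self hval (reach u).some

theorem isBalanced_iff_exists_isBalancingSwitch (hsymm : ∀ u v, σ u v = σ v u)
    (hval : ∀ u v, G.Adj u v → σ u v = 1 ∨ σ u v = -1) :
    G.IsBalanced σ ↔ ∃ f, G.IsBalancingSwitch σ f := by
  refine ⟨fun hbal => ?_, fun ⟨f, hf⟩ v c _ => ?_⟩
  · exact exists_isBalancingSwitch_of_sign_eq hval fun _ _ =>
      Walk.sign_eq_sign_of_isBalanced hsymm hval hbal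
  · rw [c.sign_eq_of_isBalancingSwitch hf]
    exact mul_self_eq_one_iff.mpr (hf.1 v)

end SimpleGraph

open SimpleGraph in
/-- A signed graph `(G, σ)` is balanced (every cycle has positive sign) iff either all
edges are positive, or the vertex set can be partitioned into two subsets such that
positive edges join vertices in the same subset and negative edges join vertices in
different subsets. -/
theorem stmt_0 {V : Type*} (G : SimpleGraph V) (σ : V → V → ℤ)
    (hsymm : ∀ u v, σ u v = σ v u)
    (hval : ∀ u v, G.Adj u v → σ u v = 1 ∨ σ u v = -1) :
    (∀ (v : V) (w : G.Walk v v), w.IsCycle →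
        (w.darts.map (fun d => σ d.toProd.1 d.toProd.2)).prod = 1) ↔
      ((∀ u v, G.Adj u v → σ u v = 1) ∨
        ∃ S : Set V, ∀ u v, G.Adj u v →
          (σ u v = 1 → (u ∈ S ↔ v ∈ S)) ∧ (σ u v = -1 → ¬(u ∈ S ↔ v ∈ S))) := by
  refine (isBalanced_iff_exists_isBalancingSwitch hsymm hval).trans
    ⟨fun ⟨f, hf⟩ => Or.inr ⟨{x | f x = 1}, fun _ _ h => hf.eq_one_iff_of_adj h⟩, ?_⟩
  rintro (hpos | ⟨S, hS⟩)
  · exact ⟨1, fun _ => Or.inl rfl, fun u v h => by simp [hpos u v h]⟩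
  · exact exists_isBalancingSwitch_of_partition hval S hS
end

section
/- The determinant of the adjacency matrix of the path graph P_n is 1 if n ≡ 0 (mod 4), -1 if n ≡ 2 (mod 4), and 0 if n is odd. -/
/-!
The first row of `P_{n+2}` is `e₁`, and after deleting it together with column `1`, the first
column of the minor is `e₀`. Two Laplace expansions therefore delete the first two vertices:
`det P_{n+2} = -det P_n`. With `det P_0 = 1` and `det P_1 = 0` this gives `(-1)^k` for `n = 2k`
and `0` for odd `n`.
-/

open Matrix

section

variable (R : Type*) [CommRing R]

def pathAdjMatrix (n : ℕ) : Matrix (Fin n) (Fin n) R :=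
  Matrix.of fun i j : Fin n => if (i : ℕ) + 1 = j ∨ (j : ℕ) + 1 = i then 1 else 0

variable {R}

theorem pathAdjMatrix_apply {n : ℕ} (i j : Fin n) :
    pathAdjMatrix R n i j = if (i : ℕ) + 1 = j ∨ (j : ℕ) + 1 = i then 1 else 0 := rfl

theorem pathAdjMatrix_zero_apply {n : ℕ} (j : Fin (n + 2)) :
    pathAdjMatrix R (n + 2) 0 j = if j = 1 then 1 else 0 := by
  simp only [pathAdjMatrix_apply, Fin.ext_iff, Fin.val_zero, Fin.val_one]
  congr 1
  simp only [eq_iff_iff]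
  omega

theorem pathAdjMatrix_comm {n : ℕ} (i j : Fin n) :
    pathAdjMatrix R n i j = pathAdjMatrix R n j i := by
  simp only [pathAdjMatrix_apply, or_comm]

theorem pathAdjMatrix_succ_succ {n : ℕ} (i j : Fin n) :
    pathAdjMatrix R (n + 2) i.succ.succ j.succ.succ = pathAdjMatrix R n i j := by
  simp only [pathAdjMatrix_apply, Fin.val_succ, Nat.add_right_cancel_iff]

theorem pathAdjMatrix_submatrix_succ_succ (n : ℕ) :
    (pathAdjMatrix R (n + 2)).submatrix (Fin.succ ∘ Fin.succ) (Fin.succ ∘ Fin.succ) =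
      pathAdjMatrix R n := by
  ext i j
  simp only [submatrix_apply, Function.comp_apply, pathAdjMatrix_succ_succ]

theorem det_pathAdjMatrix_add_two (n : ℕ) :
    (pathAdjMatrix R (n + 2)).det = -(pathAdjMatrix R n).det := by
  rw [det_succ_row_zero, Finset.sum_eq_single 1
    (fun j _ hj => by simp [pathAdjMatrix_zero_apply, hj]) (by simp)]
  rw [det_succ_column_zero, Finset.sum_eq_single 0 (fun i _ hi => by
      have : i.succ ≠ 1 := by rwa [Ne, ← Fin.succ_zero_eq_one, Fin.succ_inj]
      simp [pathAdjMatrix_comm _ 0, pathAdjMatrix_zero_apply, this]) (by simp)]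
  have hcols : Fin.succAbove (1 : Fin (n + 2)) ∘ Fin.succ = Fin.succ ∘ Fin.succ := by
    ext j; simp
  simp [pathAdjMatrix_comm _ 0, pathAdjMatrix_zero_apply, hcols, pathAdjMatrix_submatrix_succ_succ]

theorem det_pathAdjMatrix_two_mul (k : ℕ) : (pathAdjMatrix R (2 * k)).det = (-1) ^ k := by
  induction k with
  | zero => simp
  | succ k ih => rw [Nat.mul_succ, det_pathAdjMatrix_add_two, ih, pow_succ, mul_neg_one]

theorem det_pathAdjMatrix_two_mul_add_one (k : ℕ) : (pathAdjMatrix R (2 * k + 1)).det = 0 := by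
  induction k with
  | zero => simp [pathAdjMatrix_apply]
  | succ k ih => rw [Nat.mul_succ, add_right_comm, det_pathAdjMatrix_add_two, ih, neg_zero]

end

/-- Determinant of the adjacency matrix of the path graph `P_n`. -/
theorem stmt_4 (n : ℕ) (A : Matrix (Fin n) (Fin n) ℤ)
    (hA : A = Matrix.of fun i j : Fin n =>
      if (i : ℕ) + 1 = j ∨ (j : ℕ) + 1 = i then 1 else 0) :
    (n % 4 = 0 → A.det = 1) ∧
    (n % 4 = 2 → A.det = -1) ∧
    (n % 2 = 1 → A.det = 0) := by
  obtain rfl : A = pathAdjMatrix ℤ n := hA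
  obtain ⟨k, rfl | rfl⟩ := Nat.even_or_odd' n
  · rw [det_pathAdjMatrix_two_mul]
    exact ⟨fun h => Even.neg_one_pow (Nat.even_iff.mpr (by omega)),
      fun h => Odd.neg_one_pow (Nat.odd_iff.mpr (by omega)), fun h => by omega⟩
  · rw [det_pathAdjMatrix_two_mul_add_one]
    exact ⟨fun h => by omega, fun h => by omega, fun _ => rfl⟩
end

section
/- The characteristic polynomial of the adjacency matrix of the signed complete graph K^{m,r}_{mr} equals (1-λ)^{m(r-1)} (1-2r-λ)^{m-1} (1 + r(m-2) - λ). -/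
/-!
Write `J` for an all-ones matrix. Then `A - λ I = I_m ⊗ B + J` with `B = (1 - λ) I_r - 2 J`.
If a matrix `D` has all row sums equal to `s ≠ 0`, then `D * (1/s) J = J`, so
`D + J = D (I + (1/s) J)` and the rank-one determinant lemma gives `det (D + J) = det D (1 + N/s)`.
Applied to `B` (row sum `1 - λ - 2r`) and then to `I_m ⊗ B` (same row sums), this computes the
determinant whenever `λ ∉ {1, 1 - 2r}`; both sides are continuous in `λ`, so the identity holds
everywhere.
-/

open Matrix
open scoped Kronecker

namespace Matrix

variable {K : Type*} [Field K] {n : Type*} [Fintype n]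

section DecidableEq

variable [DecidableEq n]

theorem det_add_of_const_of_mulVec_one {D : Matrix n n K} {s : K} (hs : s ≠ 0)
    (hD : D *ᵥ 1 = s • 1) (a : K) :
    det (D + of fun _ _ => a) = det D * (1 + Fintype.card n * a / s) := by
  have hfactor : D + of (fun _ _ => a) = D * (1 + vecMulVec ((a / s) • 1) 1) := by
    rw [Matrix.mul_add, Matrix.mul_one, mul_vecMulVec, mulVec_smul, hD]
    ext i j
    simp [hs]
  rw [hfactor, det_mul, vecMulVec_eq Unit, det_one_add_replicateCol_mul_replicateRow]
  simp [dotProduct, mul_div_assoc]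

theorem smul_one_add_of_const_mulVec_one (c a : K) :
    (c • 1 + of fun _ _ => a : Matrix n n K) *ᵥ 1 = (c + Fintype.card n * a) • 1 := by
  rw [add_mulVec, smul_mulVec, one_mulVec, add_smul]
  ext i
  simp [mulVec, dotProduct]

theorem det_smul_one_add_of_const [Nonempty n] {c : K} (hc : c ≠ 0) (a : K) :
    det (c • 1 + of fun _ _ => a : Matrix n n K) =
      c ^ (Fintype.card n - 1) * (c + Fintype.card n * a) := by
  rw [det_add_of_const_of_mulVec_one hc (by rw [smul_mulVec, one_mulVec]), det_smul, det_one,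
    mul_one]
  obtain ⟨k, hk⟩ := Nat.exists_eq_add_one.mpr (Fintype.card_pos (α := n))
  rw [hk, Nat.add_sub_cancel, pow_succ]
  field_simp

end DecidableEq

theorem one_kronecker_mulVec_one {ι : Type*} [Fintype ι] [DecidableEq ι] {B : Matrix n n K}
    {s : K} (hB : B *ᵥ 1 = s • 1) :
    ((1 : Matrix ι ι K) ⊗ₖ B) *ᵥ 1 = s • 1 := by
  ext p
  have hrow : ∑ l, B p.2 l = s := by simpa [mulVec, dotProduct] using congrFun hB p.2
  simp [mulVec, dotProduct, Fintype.sum_prod_type, one_apply, hrow]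

end Matrix

/-- `ι` indexes the negative cliques of `K^{m,r}_{mr}` and `κ` the vertices inside each of them. -/
def signedCompleteAdjMatrix (ι κ R : Type*) [DecidableEq ι] [DecidableEq κ] [Ring R] :
    Matrix (ι × κ) (ι × κ) R :=
  of fun p q => if p.1 = q.1 then (if p.2 = q.2 then 0 else -1) else 1

section SignedComplete

variable {ι κ : Type*} [DecidableEq ι] [DecidableEq κ] {K : Type*} [Field K]

theorem signedCompleteAdjMatrix_sub_smul_one [Fintype ι] (lam : K) :
    signedCompleteAdjMatrix ι κ K - lam • 1 =
      (1 : Matrix ι ι K) ⊗ₖ ((1 - lam) • 1 + of fun _ _ => -2) + of fun _ _ => 1 := by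
  ext ⟨i, k⟩ ⟨j, l⟩
  by_cases hij : i = j <;> by_cases hkl : k = l <;>
    simp [signedCompleteAdjMatrix, one_apply, hij, hkl] <;> ring

theorem det_signedCompleteAdjMatrix_sub_smul_one [Fintype ι] [Fintype κ] [Nonempty ι]
    [Nonempty κ] {lam : K} (h1 : lam ≠ 1) (h2 : lam ≠ 1 - 2 * Fintype.card κ) :
    det (signedCompleteAdjMatrix ι κ K - lam • 1) =
      (1 - lam) ^ (Fintype.card ι * (Fintype.card κ - 1)) *
        (1 - 2 * Fintype.card κ - lam) ^ (Fintype.card ι - 1) *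
          (1 + Fintype.card κ * (Fintype.card ι - 2) - lam) := by
  replace h1 := sub_ne_zero.2 h1.symm
  replace h2 := sub_ne_zero.2 h2.symm
  have hrowsum : 1 - lam + Fintype.card κ * -2 = 1 - 2 * Fintype.card κ - lam := by ring
  have hB := smul_one_add_of_const_mulVec_one (n := κ) (1 - lam) (-2)
  rw [hrowsum] at hB
  rw [signedCompleteAdjMatrix_sub_smul_one, det_add_of_const_of_mulVec_one h2
    (one_kronecker_mulVec_one hB), det_kronecker, det_one, one_pow, one_mul,
    det_smul_one_add_of_const h1, hrowsum, Fintype.card_prod, mul_pow, ← pow_mul]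
  obtain ⟨k, hk⟩ := Nat.exists_eq_add_one.mpr (Fintype.card_pos (α := ι))
  rw [hk, Nat.add_sub_cancel, pow_succ]
  field_simp
  push_cast
  ring

end SignedComplete

/-- Characteristic polynomial `φ(λ) = det(A - λI)` of the signed complete graph
`K^{m,r}_{mr}`: `m` negative cliques of order `r`, all other edges positive. -/
theorem stmt_9 (m r : ℕ) (hm : 1 ≤ m) (hr : 1 ≤ r)
    (A : Matrix (Fin m × Fin r) (Fin m × Fin r) ℝ)
    (hA : A = Matrix.of fun p q =>
      if p.1 = q.1 then (if p.2 = q.2 then 0 else -1) else 1) :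
    ∀ lam : ℝ, (A - lam • (1 : Matrix (Fin m × Fin r) (Fin m × Fin r) ℝ)).det =
      (1 - lam) ^ (m * (r - 1)) * (1 - 2 * r - lam) ^ (m - 1) *
        (1 + r * (m - 2) - lam) := by
  subst hA
  have : Nonempty (Fin m) := ⟨⟨0, hm⟩⟩
  have : Nonempty (Fin r) := ⟨⟨0, hr⟩⟩
  have hdense : Dense ({1, 1 - 2 * (r : ℝ)}ᶜ : Set ℝ) :=
    ((Set.finite_singleton _).insert _).countable.dense_compl ℝ
  refine congrFun (Continuous.ext_on hdense ?_ (by fun_prop) fun lam hlam => ?_)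
  · exact Continuous.matrix_det (by fun_prop)
  · simp only [Set.mem_compl_iff, Set.mem_insert_iff, Set.mem_singleton_iff, not_or] at hlam
    simpa [signedCompleteAdjMatrix] using
      det_signedCompleteAdjMatrix_sub_smul_one (ι := Fin m) (κ := Fin r) hlam.1
        (by simpa using hlam.2)
end

section
/- The determinant of the adjacency matrix of K^{m,r}_{mr} equals (1-2r)^{m-1} (1 + r(m-2)). -/
/-!
Write `J` for all-ones matrices. The adjacency matrix is `A = C + J`, where `C = I_m ⊗ (I_r - 2J_r)`
is block diagonal, so `det C = (1 - 2r)^m`, and the all-ones vector `𝟙` is an eigenvector of `C`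
with eigenvalue `1 - 2r`. As `J = 𝟙𝟙ᵀ` has rank one, the matrix determinant lemma gives
`det A = det C · (1 + 𝟙ᵀC⁻¹𝟙) = (1 - 2r)^m (1 + mr / (1 - 2r))`, valid in characteristic zero
since `1 - 2r` is odd, hence nonzero. The integer determinant is recovered by casting to `ℚ`.
-/

open Matrix
open scoped Kronecker

namespace Matrix

theorem det_add_replicateCol_mul_replicateRow_of_mulVec_eq_smul {n K : Type*} [Fintype n]
    [DecidableEq n] [Field K] {C : Matrix n n K} {u : n → K} {c : K} (hC : IsUnit C.det)
    (hc : c ≠ 0) (hu : C *ᵥ u = c • u) (v : n → K) :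
    (C + replicateCol Unit u * replicateRow Unit v).det = C.det * (1 + c⁻¹ * (v ⬝ᵥ u)) := by
  have hinv : C⁻¹ *ᵥ u = c⁻¹ • u := by
    rw [← inv_smul_smul₀ hc (C⁻¹ *ᵥ u), ← mulVec_smul, ← hu, mulVec_mulVec,
      nonsing_inv_mul _ hC, one_mulVec]
  rw [det_add_replicateCol_mul_replicateRow hC, Matrix.mul_assoc, ← replicateCol_mulVec, hinv,
    det_unique (1 + _), add_apply, one_apply_eq, replicateRow_mul_replicateCol_apply,
    dotProduct_smul, smul_eq_mul]

section AllOnes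

variable {ι κ R : Type*} [CommRing R]

def allOnes (κ R : Type*) [One R] : Matrix κ κ R :=
  of fun _ _ => 1

theorem allOnes_eq_replicateCol_mul_replicateRow :
    allOnes κ R = replicateCol Unit (1 : κ → R) * replicateRow Unit (1 : κ → R) := by
  ext
  simp [allOnes, mul_apply]

variable [Fintype κ]

theorem allOnes_mulVec_one : allOnes κ R *ᵥ 1 = (Fintype.card κ : R) • 1 := by
  ext
  simp [allOnes, mulVec, dotProduct]

theorem det_one_add_smul_allOnes [DecidableEq κ] (b : R) :
    (1 + b • allOnes κ R).det = 1 + b * Fintype.card κ := by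
  rw [allOnes_eq_replicateCol_mul_replicateRow, ← Matrix.mul_smul, ← replicateRow_smul,
    det_one_add_replicateCol_mul_replicateRow]
  simp [dotProduct, Finset.sum_const, mul_comm]

theorem one_add_smul_allOnes_mulVec_one [DecidableEq κ] (b : R) :
    (1 + b • allOnes κ R) *ᵥ 1 = (1 + b * Fintype.card κ) • 1 := by
  rw [add_mulVec, one_mulVec, smul_mulVec, allOnes_mulVec_one, smul_smul, add_smul, one_smul]

theorem one_kronecker_mulVec_one_s10 [Fintype ι] [DecidableEq ι] (B : Matrix κ κ R) :
    ((1 : Matrix ι ι R) ⊗ₖ B) *ᵥ 1 = fun p => (B *ᵥ 1) p.2 := by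
  ext ⟨i, k⟩
  simp [mulVec, dotProduct, Fintype.sum_prod_type, one_apply]

end AllOnes

end Matrix

section NegativeCliques

variable (ι κ R : Type*) [DecidableEq ι] [DecidableEq κ]

/-- `K^{m,r}_{mr}` on the vertex set `ι × κ`, its negative cliques being the fibres `{i} × κ`. -/
def negCliqueAdjMatrix [Ring R] : Matrix (ι × κ) (ι × κ) R :=
  of fun p q => if p.1 = q.1 then (if p.2 = q.2 then 0 else -1) else 1

variable {ι κ R}

theorem map_negCliqueAdjMatrix [Ring R] {S : Type*} [Ring S] (f : R →+* S) :
    (negCliqueAdjMatrix ι κ R).map f = negCliqueAdjMatrix ι κ S := by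
  ext p q
  simp only [negCliqueAdjMatrix, map_apply, of_apply]
  split_ifs <;> simp

theorem negCliqueAdjMatrix_eq_one_kronecker_add_allOnes [CommRing R] :
    negCliqueAdjMatrix ι κ R =
      (1 : Matrix ι ι R) ⊗ₖ (1 + (-2 : R) • allOnes κ R) + allOnes (ι × κ) R := by
  ext ⟨i, k⟩ ⟨j, l⟩
  simp only [negCliqueAdjMatrix, allOnes, of_apply, kronecker_apply, Matrix.add_apply,
    one_apply, Matrix.smul_apply]
  split_ifs <;> simp_all <;> norm_num

variable [Fintype ι] [Fintype κ]

theorem det_negCliqueAdjMatrix {K : Type*} [Field K] [CharZero K] [Nonempty ι] :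
    (negCliqueAdjMatrix ι κ K).det = (1 - 2 * Fintype.card κ : K) ^ (Fintype.card ι - 1) *
      (1 + Fintype.card κ * (Fintype.card ι - 2)) := by
  set c : K := 1 + -2 * Fintype.card κ
  have hc : c ≠ 0 := by
    have h : ((1 + -2 * Fintype.card κ : ℤ) : K) ≠ 0 := Int.cast_ne_zero.2 (by omega)
    push_cast at h
    exact h
  set C : Matrix (ι × κ) (ι × κ) K := 1 ⊗ₖ (1 + (-2 : K) • allOnes κ K)
  have hdet : C.det = c ^ Fintype.card ι := by
    rw [det_kronecker, det_one, one_pow, one_mul, det_one_add_smul_allOnes]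
  have hCunit : IsUnit C.det := by
    rw [hdet]
    exact (pow_ne_zero _ hc).isUnit
  have hev : C *ᵥ 1 = c • 1 := by
    rw [one_kronecker_mulVec_one_s10, one_add_smul_allOnes_mulVec_one]
    rfl
  have hdot : (1 : ι × κ → K) ⬝ᵥ 1 = Fintype.card ι * Fintype.card κ := by
    simp [dotProduct]
  obtain ⟨m, hm⟩ := Nat.exists_eq_add_one_of_ne_zero (Fintype.card_ne_zero (α := ι))
  rw [negCliqueAdjMatrix_eq_one_kronecker_add_allOnes,
    allOnes_eq_replicateCol_mul_replicateRow (κ := ι × κ),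
    det_add_replicateCol_mul_replicateRow_of_mulVec_eq_smul hCunit hc hev, hdet, hdot, hm,
    pow_succ, Nat.add_sub_cancel, mul_assoc, mul_add, mul_one, mul_inv_cancel_left₀ hc]
  push_cast
  ring

end NegativeCliques

theorem stmt_10_general (m r : ℕ) (hm : 1 ≤ m)
    (A : Matrix (Fin m × Fin r) (Fin m × Fin r) ℤ)
    (hA : A = Matrix.of fun p q =>
      if p.1 = q.1 then (if p.2 = q.2 then 0 else -1) else 1) :
    A.det = (1 - 2 * (r : ℤ)) ^ (m - 1) * (1 + (r : ℤ) * ((m : ℤ) - 2)) := by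
  have : Nonempty (Fin m) := ⟨⟨0, hm⟩⟩
  apply Int.cast_injective (α := ℚ)
  calc ((A.det : ℤ) : ℚ) = (negCliqueAdjMatrix (Fin m) (Fin r) ℚ).det := by
        rw [hA, Int.cast_det, ← map_negCliqueAdjMatrix (Int.castRingHom ℚ)]
        rfl
  _ = _ := by
        rw [det_negCliqueAdjMatrix]
        simp

/-- Determinant of the adjacency matrix of `K^{m,r}_{mr}`. -/
theorem stmt_10 (m r : ℕ) (hm : 1 ≤ m) (hr : 1 ≤ r)
    (A : Matrix (Fin m × Fin r) (Fin m × Fin r) ℤ)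
    (hA : A = Matrix.of fun p q =>
      if p.1 = q.1 then (if p.2 = q.2 then 0 else -1) else 1) :
    A.det = (1 - 2 * (r : ℤ)) ^ (m - 1) * (1 + (r : ℤ) * ((m : ℤ) - 2)) :=
  stmt_10_general m r hm A hA
end

section
/- The eigenvalues of the adjacency matrix of K^{m,r}_{mr} are 1 with multiplicity m(r-1), 1-2r with multiplicity m-1, and 1 + r(m-2) with multiplicity 1. -/
/-!
The all-ones matrix `J` of order `n + 1` is diagonalised by the basis formed by the all-ones
vector (eigenvalue `n + 1`) and the vectors `e₀ - eⱼ` (eigenvalue `0`). The adjacency matrix of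
`K^{m,r}_{mr}` is `J_m ⊗ J_r - 2 (I_m ⊗ J_r) + I`, so the Kronecker product of these two bases
diagonalises it, and its eigenvalues are read off the diagonal `(εᵢ - 2) δⱼ + 1`, where `εᵢ` and
`δⱼ` are the eigenvalues of `J_m` and `J_r`.
-/

open Matrix Polynomial
open scoped Kronecker

theorem Finset.univ_val_map_prod {α β γ : Type*} [Fintype α] [Fintype β] (f : α × β → γ) :
    univ.val.map f = univ.val.bind fun a => univ.val.map fun b => f (a, b) := by
  rw [← univ_product_univ, product_val, SProd.sprod, Multiset.instSProd]
  simp [Multiset.product, Multiset.map_bind]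

theorem Fin.univ_val_map_succ {α : Type*} {n : ℕ} (f : Fin (n + 1) → α) :
    Finset.univ.val.map f = f 0 ::ₘ Finset.univ.val.map fun i : Fin n => f i.succ := by
  rw [Fin.univ_succ, Finset.cons_val, Multiset.map_cons, Finset.map_val, Multiset.map_map]
  rfl

theorem Fin.univ_val_map_prod_succ {α : Type*} {a b : ℕ} (f : Fin (a + 1) × Fin (b + 1) → α) :
    Finset.univ.val.map f = f (0, 0) ::ₘ Finset.univ.val.map (fun i : Fin a => f (i.succ, 0)) +
      Finset.univ.val.map fun p : Fin (a + 1) × Fin b => f (p.1, p.2.succ) := by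
  simp only [Finset.univ_val_map_prod, Fin.univ_val_map_succ (n := b), Multiset.bind_cons]
  rw [Fin.univ_val_map_succ fun i => f (i, 0), Multiset.cons_add]

namespace Matrix

theorem charpoly_conj_of_mul_eq_one {R n : Type*} [CommRing R] [Fintype n] [DecidableEq n]
    {P Q : Matrix n n R} (h : P * Q = 1) (A : Matrix n n R) :
    (P * A * Q).charpoly = A.charpoly := by
  rw [charpoly_mul_comm, ← mul_assoc, mul_eq_one_comm.mp h, one_mul]

theorem roots_charpoly_diagonal {R n : Type*} [CommRing R] [IsDomain R] [Fintype n]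
    [DecidableEq n] (d : n → R) :
    (diagonal d).charpoly.roots = Finset.univ.val.map d := by
  rw [charpoly_diagonal, Finset.prod_eq_multiset_prod,
    ← roots_multiset_prod_X_sub_C (Finset.univ.val.map d), Multiset.map_map]
  rfl

theorem kronecker_mul_kronecker_mul_kronecker {R ι κ : Type*} [CommSemiring R] [Fintype ι]
    [Fintype κ] (P X Q : Matrix ι ι R) (P' Y Q' : Matrix κ κ R) :
    P ⊗ₖ P' * X ⊗ₖ Y * Q ⊗ₖ Q' = (P * X * Q) ⊗ₖ (P' * Y * Q') := by
  rw [mul_kronecker_mul, mul_kronecker_mul]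

theorem of_ite_eq_kronecker {R ι κ : Type*} [Ring R] [DecidableEq ι] [DecidableEq κ] :
    (of fun p q : ι × κ => if p.1 = q.1 then (if p.2 = q.2 then 0 else -1) else 1 :
        Matrix (ι × κ) (ι × κ) R) =
      of 1 ⊗ₖ of 1 - 2 • (1 ⊗ₖ of 1) + 1 := by
  ext ⟨i, k⟩ ⟨j, l⟩
  by_cases hij : i = j <;> by_cases hkl : k = l <;> simp [hij, hkl] <;> norm_num

def onesEigenbasis {R : Type*} [Ring R] (n : ℕ) : Matrix (Fin (n + 1)) (Fin (n + 1)) R :=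
  of fun i j => if j = 0 then 1 else (if i = 0 then 1 else 0) - if i = j then 1 else 0

def onesEigenvalues {R : Type*} [Ring R] (n : ℕ) : Fin (n + 1) → R :=
  Pi.single 0 ((n : R) + 1)

theorem of_one_mul_onesEigenbasis {R : Type*} [Ring R] (n : ℕ) :
    of 1 * onesEigenbasis n = onesEigenbasis n * diagonal (onesEigenvalues (R := R) n) := by
  ext i j
  rw [mul_diagonal]
  by_cases hj : j = 0 <;>
    simp [onesEigenbasis, onesEigenvalues, mul_apply, hj, Finset.sum_sub_distrib]

variable {K : Type*} [Field K]

def onesEigenbasisInv (n : ℕ) : Matrix (Fin (n + 1)) (Fin (n + 1)) K :=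
  of fun i j => ((n : K) + 1)⁻¹ - if i ≠ 0 ∧ i = j then 1 else 0

variable [CharZero K]

theorem onesEigenbasisInv_mul_onesEigenbasis (n : ℕ) :
    onesEigenbasisInv n * onesEigenbasis n = (1 : Matrix (Fin (n + 1)) (Fin (n + 1)) K) := by
  have hn : (n : K) + 1 ≠ 0 := n.cast_add_one_ne_zero
  ext i j
  by_cases hj : j = 0
  · by_cases hi : i = 0 <;>
      simp [onesEigenbasis, onesEigenbasisInv, mul_apply, hi, hj, Finset.sum_sub_distrib,
        one_apply, hn]
  · by_cases hi : i = 0 <;>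
      simp [onesEigenbasis, onesEigenbasisInv, mul_apply, hi, hj, Ne.symm hj, mul_sub,
        Finset.sum_sub_distrib, one_apply]

theorem onesEigenbasisInv_mul_of_one_mul_onesEigenbasis (n : ℕ) :
    onesEigenbasisInv n * of 1 * onesEigenbasis n = diagonal (onesEigenvalues (R := K) n) := by
  rw [mul_assoc, of_one_mul_onesEigenbasis, ← mul_assoc, onesEigenbasisInv_mul_onesEigenbasis,
    one_mul]

theorem onesEigenbasisInv_kronecker_mul_onesEigenbasis_kronecker (a b : ℕ) :
    onesEigenbasisInv a ⊗ₖ onesEigenbasisInv b * onesEigenbasis a ⊗ₖ onesEigenbasis b =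
      (1 : Matrix (Fin (a + 1) × Fin (b + 1)) (Fin (a + 1) × Fin (b + 1)) K) := by
  rw [← mul_kronecker_mul, onesEigenbasisInv_mul_onesEigenbasis,
    onesEigenbasisInv_mul_onesEigenbasis, one_kronecker_one]

theorem onesEigenbasis_kronecker_conj (a b : ℕ) :
    onesEigenbasisInv a ⊗ₖ onesEigenbasisInv b * (of 1 ⊗ₖ of 1 - 2 • (1 ⊗ₖ of 1) + 1) *
        onesEigenbasis a ⊗ₖ onesEigenbasis b =
      diagonal fun p => (onesEigenvalues (R := K) a p.1 - 2) * onesEigenvalues b p.2 + 1 := by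
  rw [mul_add, mul_sub, add_mul, sub_mul, mul_smul_comm, smul_mul_assoc, mul_one,
    onesEigenbasisInv_kronecker_mul_onesEigenbasis_kronecker,
    kronecker_mul_kronecker_mul_kronecker, kronecker_mul_kronecker_mul_kronecker, mul_one,
    onesEigenbasisInv_mul_onesEigenbasis, onesEigenbasisInv_mul_of_one_mul_onesEigenbasis,
    onesEigenbasisInv_mul_of_one_mul_onesEigenbasis, ← diagonal_one, diagonal_kronecker_diagonal,
    diagonal_kronecker_diagonal, ← diagonal_smul, diagonal_sub, ← diagonal_one, diagonal_add]
  congr 1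
  ext ⟨i, k⟩
  simp only [Pi.smul_apply, nsmul_eq_mul, one_mul]
  ring

end Matrix

/-- The eigenvalues of `K^{m,r}_{mr}` are `1` with multiplicity `m(r-1)`,
`1-2r` with multiplicity `m-1`, and `1+r(m-2)` with multiplicity `1`. -/
theorem stmt_11 (m r : ℕ) (hm : 1 ≤ m) (hr : 1 ≤ r)
    (A : Matrix (Fin m × Fin r) (Fin m × Fin r) ℝ)
    (hA : A = Matrix.of fun p q =>
      if p.1 = q.1 then (if p.2 = q.2 then 0 else -1) else 1) :
    A.charpoly.roots =
      Multiset.replicate (m * (r - 1)) (1 : ℝ) +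
      Multiset.replicate (m - 1) ((1 : ℝ) - 2 * r) +
      Multiset.replicate 1 ((1 : ℝ) + r * ((m : ℝ) - 2)) := by
  obtain ⟨a, rfl⟩ : ∃ a, m = a + 1 := ⟨m - 1, by omega⟩
  obtain ⟨b, rfl⟩ : ∃ b, r = b + 1 := ⟨r - 1, by omega⟩
  rw [hA, of_ite_eq_kronecker, ← charpoly_conj_of_mul_eq_one
    (onesEigenbasisInv_kronecker_mul_onesEigenbasis_kronecker a b),
    onesEigenbasis_kronecker_conj, roots_charpoly_diagonal, Fin.univ_val_map_prod_succ]
  simp only [onesEigenvalues, Pi.single_apply, Fin.succ_ne_zero, if_true, if_false, mul_zero, zero_add, zero_sub,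
    Multiset.map_const', Finset.card_val, Finset.card_univ, Fintype.card_fin, Fintype.card_prod,
    Nat.add_sub_cancel, Multiset.replicate_one, ← Multiset.singleton_add]
  push_cast
  ring_nf
  abel
end

section
/- For λ ∉ {1, 1-2r, 1+r(m-2)}, the matrix A(K^{m,r}_{mr}) - λI is invertible with inverse (1/(λ+2r-1)) [ (1/(λ-1)) I_m ⊗ (2A(K_r) - (λ+2r-3) I_r) - (1/(λ + r(2-m) - 1)) J ], where J is the all-ones matrix of order mr and A(K_r) = J_r - I_r. -/
/-!
Write `J` for the all-ones matrix of order `mr` and `K = Iₘ ⊗ J_r` for the block-diagonal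
all-ones matrix, so that `A = J - 2K + I`. The relations `J² = mr J`, `K² = r K`, `JK = KJ = r J`
make `span {I, K, J}` a commutative algebra containing `A - λI`, and the claimed inverse is
checked there by comparing the coefficients of `I`, `K` and `J`. The excluded values of `λ` are
the eigenvalues `1`, `1 - 2r`, `1 + r(m - 2)` of `A`, on the vectors with zero block sums, the
block-constant vectors orthogonal to `𝟙`, and `𝟙` respectively.
-/

open Kronecker

section InverseInSpan

variable {𝕜 R : Type*} [Field 𝕜] [Ring R] [Algebra 𝕜 R]

theorem mul_eq_one_and_mul_eq_one_of_relations {J K X Y : R} {a b lam : 𝕜}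
    (hJJ : J * J = (a * b) • J) (hKK : K * K = b • K) (hJK : J * K = b • J) (hKJ : K * J = b • J)
    (h1 : lam ≠ 1) (h2 : lam ≠ 1 - 2 * b) (h3 : lam ≠ 1 + b * (a - 2))
    (hX : X = J - (2 : 𝕜) • K + 1 - lam • 1)
    (hY : Y = (lam + 2 * b - 1)⁻¹ •
      ((lam - 1)⁻¹ • ((2 : 𝕜) • K - (lam + 2 * b - 1) • 1) - (lam + b * (2 - a) - 1)⁻¹ • J)) :
    X * Y = 1 ∧ Y * X = 1 := by
  have hd1 : lam - 1 ≠ 0 := sub_ne_zero.mpr h1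
  have hd2 : lam + 2 * b - 1 ≠ 0 := fun h => h2 (by linear_combination h)
  have hd3 : lam + b * (2 - a) - 1 ≠ 0 := fun h => h3 (by linear_combination h)
  subst hX hY
  constructor <;>
  · simp only [mul_smul_comm, smul_mul_assoc, mul_sub, sub_mul, add_mul, mul_add, mul_one, one_mul,
      hJJ, hKK, hJK, hKJ, smul_smul, smul_sub, smul_add]
    match_scalars <;> field_simp <;> ring

end InverseInSpan

namespace Matrix

variable {l n α : Type*}

theorem of_one_kronecker_of_one [MulOneClass α] :
    (of 1 : Matrix l l α) ⊗ₖ (of 1 : Matrix n n α) = of 1 := by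
  ext; simp

theorem of_one_mul_of_one [Fintype n] [NonAssocSemiring α] :
    (of 1 : Matrix n n α) * of 1 = (Fintype.card n : α) • of 1 := by
  ext; simp [mul_apply]

section Blocks

variable [Fintype l] [Fintype n] [DecidableEq l] [CommSemiring α]

theorem one_kronecker_of_one_mul_self :
    ((1 : Matrix l l α) ⊗ₖ of 1 : Matrix (l × n) (l × n) α) * (1 ⊗ₖ of 1) =
      (Fintype.card n : α) • (1 ⊗ₖ of 1) := by
  rw [← mul_kronecker_mul, one_mul, of_one_mul_of_one, kronecker_smul]

theorem of_one_mul_one_kronecker_of_one :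
    (of 1 : Matrix (l × n) (l × n) α) * (1 ⊗ₖ of 1) = (Fintype.card n : α) • of 1 := by
  rw [← of_one_kronecker_of_one, ← mul_kronecker_mul, mul_one, of_one_mul_of_one, kronecker_smul]

theorem one_kronecker_of_one_mul_of_one :
    ((1 : Matrix l l α) ⊗ₖ of 1 : Matrix (l × n) (l × n) α) * of 1 = (Fintype.card n : α) • of 1 := by
  rw [← of_one_kronecker_of_one, ← mul_kronecker_mul, one_mul, of_one_mul_of_one, kronecker_smul]

end Blocks

theorem of_ite_fst_ite_snd_eq [DecidableEq l] [DecidableEq n] [Ring α] :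
    of (fun p q : l × n => if p.1 = q.1 then (if p.2 = q.2 then (0 : α) else -1) else 1) =
      of 1 - (2 : α) • ((1 : Matrix l l α) ⊗ₖ of 1) + 1 := by
  ext ⟨i, k⟩ ⟨j, k'⟩
  by_cases hij : i = j <;> by_cases hk : k = k' <;> simp [hij, hk] <;> norm_num

theorem one_kronecker_smul_of_ite_sub_smul_one [DecidableEq l] [DecidableEq n] [CommRing α]
    (c d : α) :
    (1 : Matrix l l α) ⊗ₖ (c • of (fun a b : n => if a = b then (0 : α) else 1) - d • 1) =
      c • ((1 : Matrix l l α) ⊗ₖ of 1) - (c + d) • 1 := by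
  ext ⟨i, k⟩ ⟨j, k'⟩
  by_cases hij : i = j <;> by_cases hk : k = k' <;> simp [hij, hk]

end Matrix

theorem stmt_12_general (m r : ℕ) (lam : ℝ)
    (h1 : lam ≠ 1) (h2 : lam ≠ 1 - 2 * r) (h3 : lam ≠ 1 + r * ((m : ℝ) - 2))
    (A : Matrix (Fin m × Fin r) (Fin m × Fin r) ℝ)
    (hA : A = Matrix.of fun p q =>
      if p.1 = q.1 then (if p.2 = q.2 then 0 else -1) else 1)
    (B : Matrix (Fin m × Fin r) (Fin m × Fin r) ℝ)
    (hB : B = (lam + 2 * r - 1)⁻¹ •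
      ((lam - 1)⁻¹ •
        ((1 : Matrix (Fin m) (Fin m) ℝ) ⊗ₖ
          ((2 : ℝ) • (Matrix.of fun a b : Fin r => if a = b then (0 : ℝ) else 1) -
            (lam + 2 * r - 3) • (1 : Matrix (Fin r) (Fin r) ℝ))) -
       (lam + r * (2 - (m : ℝ)) - 1)⁻¹ •
          Matrix.of (fun _ _ : Fin m × Fin r => (1 : ℝ)))) :
    (A - lam • (1 : Matrix (Fin m × Fin r) (Fin m × Fin r) ℝ)) * B = 1 ∧
    B * (A - lam • (1 : Matrix (Fin m × Fin r) (Fin m × Fin r) ℝ)) = 1 := by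
  have hJJ := Matrix.of_one_mul_of_one (n := Fin m × Fin r) (α := ℝ)
  have hKK := Matrix.one_kronecker_of_one_mul_self (l := Fin m) (n := Fin r) (α := ℝ)
  have hJK := Matrix.of_one_mul_one_kronecker_of_one (l := Fin m) (n := Fin r) (α := ℝ)
  have hKJ := Matrix.one_kronecker_of_one_mul_of_one (l := Fin m) (n := Fin r) (α := ℝ)
  simp only [Fintype.card_prod, Fintype.card_fin, Nat.cast_mul] at hJJ hKK hJK hKJ
  refine mul_eq_one_and_mul_eq_one_of_relations hJJ hKK hJK hKJ h1 h2 h3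
    (by rw [hA, Matrix.of_ite_fst_ite_snd_eq]) ?_
  rw [hB, Matrix.one_kronecker_smul_of_ite_sub_smul_one,
    show (2 : ℝ) + (lam + 2 * r - 3) = lam + 2 * r - 1 by ring]
  rfl

/-- For `λ ∉ {1, 1-2r, 1+r(m-2)}`, the matrix `A(K^{m,r}_{mr}) - λI` is invertible,
with inverse
`(1/(λ+2r-1)) [ (1/(λ-1)) Iₘ ⊗ (2A(K_r) - (λ+2r-3)I_r) - (1/(λ+r(2-m)-1)) J ]`. -/
theorem stmt_12 (m r : ℕ) (hm : 1 ≤ m) (hr : 1 ≤ r) (lam : ℝ)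
    (h1 : lam ≠ 1) (h2 : lam ≠ 1 - 2 * r) (h3 : lam ≠ 1 + r * ((m : ℝ) - 2))
    (A : Matrix (Fin m × Fin r) (Fin m × Fin r) ℝ)
    (hA : A = Matrix.of fun p q =>
      if p.1 = q.1 then (if p.2 = q.2 then 0 else -1) else 1)
    (B : Matrix (Fin m × Fin r) (Fin m × Fin r) ℝ)
    (hB : B = (lam + 2 * r - 1)⁻¹ •
      ((lam - 1)⁻¹ •
        ((1 : Matrix (Fin m) (Fin m) ℝ) ⊗ₖ
          ((2 : ℝ) • (Matrix.of fun a b : Fin r => if a = b then (0 : ℝ) else 1) -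
            (lam + 2 * r - 3) • (1 : Matrix (Fin r) (Fin r) ℝ))) -
       (lam + r * (2 - (m : ℝ)) - 1)⁻¹ •
          Matrix.of (fun _ _ : Fin m × Fin r => (1 : ℝ)))) :
    (A - lam • (1 : Matrix (Fin m × Fin r) (Fin m × Fin r) ℝ)) * B = 1 ∧
    B * (A - lam • (1 : Matrix (Fin m × Fin r) (Fin m × Fin r) ℝ)) = 1 :=
  stmt_12_general m r lam h1 h2 h3 A hA B hB
end

section
/- The determinant of the adjacency matrix of K^{m,r}_n (n > mr) equals (1-2r)^{m-1} (-1)^{n-mr-1} ( n(1-2r) + 2r(1 + m(r-1)) - 1 ). -/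
/-!
Write the adjacency matrix as `D + J`, with `J` the all-ones matrix and `D` block diagonal with
respect to the cliques, each vertex outside the cliques forming a block of its own. A block of
size `s` is `I - 2J`, of determinant `1 - 2s`, so `D w = 1` for the vector `w` equal to
`1 / (1 - 2s)` on every block of size `s`. Hence `D + J = D (I + w 1ᵀ)` and, by the rank-one
determinant formula, `det (D + J) = det D · (1 + Σ wᵢ)`. For `K^{m,r}_n` there are `m` blocks
of size `r` and `n - mr` blocks of size `1`.
-/

open Matrix

theorem Matrix.det_add_vecMulVec_of_mulVec_eq {ι R : Type*} [Fintype ι] [DecidableEq ι]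
    [CommRing R] {D : Matrix ι ι R} {w u : ι → R} (h : D *ᵥ w = u) (v : ι → R) :
    (D + vecMulVec u v).det = D.det * (1 + v ⬝ᵥ w) := by
  rw [← h, ← mul_vecMulVec, ← mul_one_add, det_mul, vecMulVec_eq (Fin 1),
    det_one_add_replicateCol_mul_replicateRow]

theorem one_sub_two_mul_natCast_ne_zero {K : Type*} [Ring K] [CharZero K] (k : ℕ) :
    (1 - 2 * k : K) ≠ 0 := by
  rw [sub_ne_zero, ne_comm]
  exact_mod_cast (by omega : 2 * k ≠ 1)

section SignedComplete

variable {ι β : Type*} [DecidableEq ι] [DecidableEq β] (blk : ι → β)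

/-- Adjacency matrix of the signed complete graph on `ι` whose negative edges join two vertices
in the same fibre of `blk`. -/
def signedCompleteMatrix (R : Type*) [Zero R] [One R] [Neg R] : Matrix ι ι R :=
  of fun i j => if i = j then 0 else if blk i = blk j then -1 else 1

theorem signedCompleteMatrix_map {R S : Type*} [Ring R] [Ring S] (f : R →+* S) :
    (signedCompleteMatrix blk R).map f = signedCompleteMatrix blk S := by
  ext i j
  simp [signedCompleteMatrix, apply_ite f]

theorem signedCompleteMatrix_sub_vecMulVec_apply {R : Type*} [Ring R] (i j : ι) :
    (signedCompleteMatrix blk R - vecMulVec 1 1 : Matrix ι ι R) i j =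
      if blk i = blk j then (if i = j then 1 else 0) - 2 else 0 := by
  by_cases hij : i = j
  · subst hij
    norm_num [signedCompleteMatrix, vecMulVec]
  · by_cases hb : blk i = blk j
    · norm_num [signedCompleteMatrix, vecMulVec, hij, hb]
    · simp [signedCompleteMatrix, vecMulVec, hij, hb]

variable [Fintype ι]

def blockSize (b : β) : ℕ :=
  Fintype.card {i // blk i = b}

theorem det_signedCompleteMatrix_sub_vecMulVec [Fintype β] (R : Type*) [CommRing R] :
    (signedCompleteMatrix blk R - vecMulVec 1 1).det = ∏ b, (1 - 2 * (blockSize blk b : R)) := by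
  let : LinearOrder β := LinearOrder.lift' _ (Fintype.equivFin β).injective
  have hblock : (signedCompleteMatrix blk R - vecMulVec 1 1).BlockTriangular blk := by
    intro i j hij
    rw [signedCompleteMatrix_sub_vecMulVec_apply, if_neg hij.ne']
  rw [hblock.det_fintype]
  refine Finset.prod_congr rfl fun b _ => ?_
  have hblock_b : toSquareBlock (signedCompleteMatrix blk R - vecMulVec 1 1) blk b =
      1 + vecMulVec (fun _ => -2) 1 := by
    ext ⟨i, hi⟩ ⟨j, hj⟩
    rw [toSquareBlock_def, of_apply, signedCompleteMatrix_sub_vecMulVec_apply,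
      if_pos (hi.trans hj.symm)]
    simp [vecMulVec, one_apply, sub_eq_add_neg]
  rw [hblock_b, vecMulVec_eq (Fin 1), det_one_add_replicateCol_mul_replicateRow]
  simp [dotProduct, blockSize]
  ring

variable {K : Type*} [Field K] [CharZero K]

theorem signedCompleteMatrix_sub_vecMulVec_mulVec :
    (signedCompleteMatrix blk K - vecMulVec 1 1) *ᵥ
      (fun i => (1 - 2 * (blockSize blk (blk i) : K))⁻¹) = 1 := by
  ext i
  simp only [mulVec, dotProduct, signedCompleteMatrix_sub_vecMulVec_apply, ite_mul, zero_mul]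
  rw [← Finset.sum_filter, Finset.filter_congr fun j _ => eq_comm,
    Finset.sum_congr rfl fun j hj => by rw [(Finset.mem_filter.1 hj).2],
    ← Finset.sum_mul, Finset.sum_sub_distrib, Finset.sum_ite_eq, if_pos (by simp),
    Finset.sum_const, nsmul_eq_mul, blockSize, Fintype.card_subtype, mul_comm _ (2 : K)]
  exact mul_inv_cancel₀ (one_sub_two_mul_natCast_ne_zero _)

theorem det_signedCompleteMatrix [Fintype β] :
    (signedCompleteMatrix blk K).det =
      (∏ b, (1 - 2 * (blockSize blk b : K))) *
        (1 + ∑ i, (1 - 2 * (blockSize blk (blk i) : K))⁻¹) := by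
  have h := det_add_vecMulVec_of_mulVec_eq (signedCompleteMatrix_sub_vecMulVec_mulVec blk)
    (1 : ι → K)
  rwa [sub_add_cancel, det_signedCompleteMatrix_sub_vecMulVec, one_dotProduct] at h

end SignedComplete

section Cliques

variable {m r p n : ℕ}

theorem blockSize_sumMap_fst_inl (k : Fin m) :
    blockSize (Sum.map Prod.fst id : (Fin m × Fin r) ⊕ Fin p → Fin m ⊕ Fin p) (.inl k) = r := by
  rw [blockSize, Fintype.card_subtype, Finset.card_filter, Fintype.sum_sum_type,
    Fintype.sum_prod_type]
  simp

theorem blockSize_sumMap_fst_inr (j : Fin p) :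
    blockSize (Sum.map Prod.fst id : (Fin m × Fin r) ⊕ Fin p → Fin m ⊕ Fin p) (.inr j) = 1 := by
  rw [blockSize, Fintype.card_subtype, Finset.card_filter, Fintype.sum_sum_type]
  simp

theorem det_signedCompleteMatrix_sumMap_fst :
    (signedCompleteMatrix (Sum.map Prod.fst id : (Fin m × Fin r) ⊕ Fin p → Fin m ⊕ Fin p) ℚ).det =
      (1 - 2 * r) ^ m * (-1) ^ p * (1 + m * r / (1 - 2 * r) - p) := by
  rw [det_signedCompleteMatrix]
  simp [Fintype.prod_sum_type, Fintype.sum_sum_type, blockSize_sumMap_fst_inl,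
    blockSize_sumMap_fst_inr]
  ring

def cliqueEquiv (h : m * r + p = n) : (Fin m × Fin r) ⊕ Fin p ≃ Fin n :=
  (Equiv.sumCongr finProdFinEquiv (Equiv.refl _)).trans (finSumFinEquiv.trans (finCongr h))

theorem cliqueEquiv_inl (h : m * r + p = n) (k : Fin m) (i : Fin r) :
    (cliqueEquiv h (.inl (k, i)) : ℕ) = i + r * k := by
  simp [cliqueEquiv]

theorem cliqueEquiv_inr (h : m * r + p = n) (j : Fin p) :
    (cliqueEquiv h (.inr j) : ℕ) = m * r + j := by
  simp [cliqueEquiv]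

theorem cliqueEquiv_inl_lt (h : m * r + p = n) (k : Fin m) (i : Fin r) :
    (cliqueEquiv h (.inl (k, i)) : ℕ) < m * r := by
  rw [cliqueEquiv_inl]
  nlinarith [i.is_lt, k.is_lt]

theorem cliqueEquiv_inl_div (h : m * r + p = n) (k : Fin m) (i : Fin r) :
    (cliqueEquiv h (.inl (k, i)) : ℕ) / r = k := by
  rw [cliqueEquiv_inl, Nat.add_mul_div_left _ _ i.pos, Nat.div_eq_of_lt i.is_lt, zero_add]

theorem sameClique_cliqueEquiv_iff (h : m * r + p = n) {x y : (Fin m × Fin r) ⊕ Fin p}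
    (hxy : x ≠ y) :
    ((cliqueEquiv h x : ℕ) < m * r ∧ (cliqueEquiv h y : ℕ) < m * r ∧
      (cliqueEquiv h x : ℕ) / r = (cliqueEquiv h y : ℕ) / r) ↔
      Sum.map Prod.fst id x = Sum.map Prod.fst id y := by
  rcases x with ⟨k, i⟩ | j <;> rcases y with ⟨l, i'⟩ | j'
  · simp [cliqueEquiv_inl_lt, cliqueEquiv_inl_div, Fin.val_inj]
  · simp [cliqueEquiv_inr]
  · simp [cliqueEquiv_inr]
  · simpa [cliqueEquiv_inr] using hxy

theorem submatrix_cliqueEquiv (h : m * r + p = n) :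
    (of fun i j : Fin n =>
      if i = j then (0 : ℤ)
      else if (i : ℕ) < m * r ∧ (j : ℕ) < m * r ∧ (i : ℕ) / r = (j : ℕ) / r then -1
      else 1).submatrix (cliqueEquiv h) (cliqueEquiv h) =
      signedCompleteMatrix (Sum.map Prod.fst id) ℤ := by
  ext x y
  simp only [submatrix_apply, of_apply, signedCompleteMatrix, (cliqueEquiv h).injective.eq_iff]
  by_cases hxy : x = y
  · simp [hxy]
  · simp only [hxy, if_false, sameClique_cliqueEquiv_iff h hxy]

end Cliques

theorem stmt_13_general (m r n : ℕ) (hm : 1 ≤ m) (hn : m * r < n)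
    (A : Matrix (Fin n) (Fin n) ℤ)
    (hA : A = Matrix.of fun i j : Fin n =>
      if i = j then 0
      else if (i : ℕ) < m * r ∧ (j : ℕ) < m * r ∧ (i : ℕ) / r = (j : ℕ) / r then -1
      else 1) :
    A.det = (1 - 2 * (r : ℤ)) ^ (m - 1) * (-1) ^ (n - m * r - 1) *
      ((n : ℤ) * (1 - 2 * r) + 2 * r * (1 + m * ((r : ℤ) - 1)) - 1) := by
  have hsum : m * r + (n - m * r) = n := by omega
  have hdet : (A.det : ℚ) =
      (1 - 2 * r) ^ m * (-1) ^ (n - m * r) * (1 + m * r / (1 - 2 * r) - (n - m * r : ℕ)) := by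
    rw [← det_submatrix_equiv_self (cliqueEquiv hsum), hA, submatrix_cliqueEquiv,
      ← det_signedCompleteMatrix_sumMap_fst, ← signedCompleteMatrix_map _ (Int.castRingHom ℚ)]
    exact RingHom.map_det (Int.castRingHom ℚ) _
  have hm_pow : (1 - 2 * r : ℚ) ^ m = (1 - 2 * r) ^ (m - 1) * (1 - 2 * r) := by
    rw [← pow_succ, Nat.sub_add_cancel hm]
  have hp_pow : (-1 : ℚ) ^ (n - m * r) = (-1) ^ (n - m * r - 1) * (-1) := by
    rw [← pow_succ, Nat.sub_add_cancel (by omega)]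
  have hc := one_sub_two_mul_natCast_ne_zero (K := ℚ) r
  apply Int.cast_injective (α := ℚ)
  rw [hdet, hm_pow, hp_pow, Nat.cast_sub hn.le]
  push_cast
  field_simp
  ring

/-- Determinant of the adjacency matrix of `K^{m,r}_n` (`n > mr`): a signed complete
graph on `n` vertices containing `m` vertex-disjoint negative cliques of order `r`
(vertices `0,…,mr-1`, grouped in consecutive blocks of size `r`), all other edges
positive. -/
theorem stmt_13 (m r n : ℕ) (hm : 1 ≤ m) (hr : 1 ≤ r) (hn : m * r < n)
    (A : Matrix (Fin n) (Fin n) ℤ)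
    (hA : A = Matrix.of fun i j : Fin n =>
      if i = j then 0
      else if (i : ℕ) < m * r ∧ (j : ℕ) < m * r ∧ (i : ℕ) / r = (j : ℕ) / r then -1
      else 1) :
    A.det = (1 - 2 * (r : ℤ)) ^ (m - 1) * (-1) ^ (n - m * r - 1) *
      ((n : ℤ) * (1 - 2 * r) + 2 * r * (1 + m * ((r : ℤ) - 1)) - 1) :=
  stmt_13_general m r n hm hn A hA
end

section
/- Let N be the k×k matrix with (i,j) entry n_j for i ≠ j and -n_i on the diagonal (i.e., column j has all entries n_j except the diagonal entry -n_j). Then det(N - λI_k) = ∏_{i=1}^k (-2n_i - λ) + Σ_{i=1}^k n_i ∏_{j≠i} (-2n_j - λ). -/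
/-!
`N - λI` is the rank-one update `diagonal (-2nᵢ - λ) + 𝟙 nᵀ`. When the diagonal is invertible,
factoring it out and applying the matrix determinant lemma gives `∏ dᵢ · (1 + Σ nᵢ / dᵢ)`;
the identity for an arbitrary diagonal follows by continuity, since diagonals with nonzero
entries are dense.
-/

open Matrix Finset

variable {ι : Type*} [Fintype ι] [DecidableEq ι]

theorem det_diagonal_add_replicateCol_mul_replicateRow_of_ne_zero {K : Type*} [Field K]
    {d : ι → K} (hd : ∀ i, d i ≠ 0) (u v : ι → K) :
    (diagonal d + replicateCol Unit u * replicateRow Unit v).det =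
      ∏ i, d i + ∑ i, v i * u i * ∏ j ∈ univ.erase i, d j := by
  have hfactor : diagonal d + replicateCol Unit u * replicateRow Unit v =
      diagonal d * (1 + replicateCol Unit (u / d) * replicateRow Unit v) := by
    have hcol : diagonal d * replicateCol Unit (u / d) = replicateCol Unit u := by
      ext i j
      simp [mul_div_cancel₀ (u i) (hd i)]
    rw [Matrix.mul_add, Matrix.mul_one, ← Matrix.mul_assoc, hcol]
  rw [hfactor, det_mul, det_diagonal, det_one_add_replicateCol_mul_replicateRow, mul_add, mul_one,
    dotProduct, mul_sum]
  congr 1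
  refine sum_congr rfl fun i _ => ?_
  rw [← mul_prod_erase univ d (mem_univ i), Pi.div_apply]
  field_simp [hd i]

theorem det_diagonal_add_replicateCol_mul_replicateRow (d u v : ι → ℝ) :
    (diagonal d + replicateCol Unit u * replicateRow Unit v).det =
      ∏ i, d i + ∑ i, v i * u i * ∏ j ∈ univ.erase i, d j := by
  have hdense : Dense {d : ι → ℝ | ∀ i, d i ≠ 0} := by
    simpa [Set.pi] using dense_pi Set.univ fun _ _ => dense_compl_singleton (0 : ℝ)
  have hlhs : Continuous fun d : ι → ℝ =>
      (diagonal d + replicateCol Unit u * replicateRow Unit v).det := by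
    fun_prop
  have hrhs : Continuous fun d : ι → ℝ =>
      ∏ i, d i + ∑ i, v i * u i * ∏ j ∈ univ.erase i, d j := by
    fun_prop
  exact congrFun (hlhs.ext_on hdense hrhs fun d hd =>
    det_diagonal_add_replicateCol_mul_replicateRow_of_ne_zero hd u v) d

/-- For the `k×k` matrix `N` with `N i j = n j` for `i ≠ j` and `N i i = -n i`,
`det(N - λI) = ∏ᵢ(-2nᵢ - λ) + Σᵢ nᵢ ∏_{j≠i}(-2nⱼ - λ)`. -/
theorem stmt_14 (k : ℕ) (n : Fin k → ℝ) (lam : ℝ)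
    (N : Matrix (Fin k) (Fin k) ℝ)
    (hN : N = Matrix.of fun i j => if i = j then -n i else n j) :
    (N - lam • (1 : Matrix (Fin k) (Fin k) ℝ)).det =
      (∏ i, (-2 * n i - lam)) +
        ∑ i, n i * ∏ j ∈ Finset.univ.erase i, (-2 * n j - lam) := by
  have hsplit : N - lam • (1 : Matrix (Fin k) (Fin k) ℝ) =
      diagonal (fun i => -2 * n i - lam) +
        replicateCol Unit (1 : Fin k → ℝ) * replicateRow Unit n := by
    ext i j
    rcases eq_or_ne i j with rfl | hij
    · simp [hN, Matrix.mul_apply, two_mul, sub_add_eq_add_sub]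
    · simp [hN, hij, Matrix.mul_apply]
  rw [hsplit, det_diagonal_add_replicateCol_mul_replicateRow]
  simp only [Pi.one_apply, mul_one]
end

section
/- Let G be the signed complete graph on n = n_1 + ... + n_k vertices with negative cliques of orders n_1 ≤ ... ≤ n_k covering the vertex set, and let λ_1 ≥ λ_2 ≥ ... ≥ λ_k be the nonzero eigenvalues of A(G) - I_n. Then λ_1 ≥ -2n_1 ≥ λ_2 ≥ -2n_2 ≥ ... ≥ λ_{k-1} ≥ -2n_{k-1} ≥ λ_k ≥ -2n_k. -/
open Matrix Finset

/-!
Courant–Fischer counting: if the quadratic form of a symmetric matrix is `≥ t‖x‖²` on a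
subspace `V`, then `V` meets the span of the eigenvectors with eigenvalue `< t` trivially, so at
most `codim V` eigenvalues lie below `t` (and symmetrically above `t`).

For `M = A(G) - I` one has `xᵀMx = (∑ x)² - 2 ∑ᵢ sᵢ(x)²`, where `sᵢ` is the sum over the `i`-th
clique. On the vectors with `sₗ = 0` for every clique larger than `nᵢ`, Cauchy–Schwarz gives
`xᵀMx ≥ -2nᵢ‖x‖²`; there are at most `k - 1 - i` such cliques, so `λᵢ ≥ -2nᵢ`. On the
block-constant vectors with total sum zero that vanish on the cliques smaller than `nᵢ`
(a space of dimension `≥ k - i - 1`) one gets `xᵀMx ≤ -2nᵢ‖x‖²`. Hence at most `N + 1 - (k - i)`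
eigenvalues exceed `-2nᵢ`; as the `N - k` zero eigenvalues are among them, `λᵢ₊₁ ≤ -2nᵢ`.
-/

lemma LinearMap.finrank_sub_finrank_le_finrank_ker {K V W : Type*} [Field K] [AddCommGroup V]
    [Module K V] [AddCommGroup W] [Module K W] [FiniteDimensional K V] [FiniteDimensional K W]
    (f : V →ₗ[K] W) : Module.finrank K V - Module.finrank K W ≤ Module.finrank K (ker f) := by
  have := f.finrank_range_add_finrank_ker
  have := (range f).finrank_le
  omega

lemma card_add_finrank_le_of_forall_eq_zero {K ι : Type*} [Field K] [Fintype ι]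
    (f : (ι → K) →ₗ[K] (ι → K)) (S : Finset ι) (V : Submodule K (ι → K))
    (hV : ∀ x ∈ V, (∀ a ∉ S, f x a = 0) → x = 0) :
    #S + Module.finrank K V ≤ Fintype.card ι := by
  classical
  set g := LinearMap.funLeft K K (Subtype.val : {a // a ∉ S} → ι) ∘ₗ f
  have hW : #S ≤ Module.finrank K (LinearMap.ker g) := by
    have := g.finrank_sub_finrank_le_finrank_ker
    rw [Module.finrank_fintype_fun_eq_card, Module.finrank_fintype_fun_eq_card,
      Fintype.card_subtype_compl, Fintype.card_coe] at this
    have := S.card_le_univ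
    omega
  have hWV : LinearMap.ker g ⊓ V = ⊥ :=
    (Submodule.eq_bot_iff _).2 fun x ⟨hxW, hxV⟩ =>
      hV x hxV fun a ha => congrFun (LinearMap.mem_ker.1 hxW) ⟨a, ha⟩
  have hdim := Submodule.finrank_sup_add_finrank_inf_eq (LinearMap.ker g) V
  have hsup := (Submodule.finrank_le (LinearMap.ker g ⊔ V)).trans_eq
    (Module.finrank_fintype_fun_eq_card K)
  rw [hWV, finrank_bot] at hdim
  omega

lemma eq_zero_of_sum_mul_sq_nonpos {ι : Type*} [Fintype ι] {w y : ι → ℝ}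
    (hw : ∀ a, y a ≠ 0 → 0 < w a) (h : ∑ a, w a * y a ^ 2 ≤ 0) : y = 0 := by
  have hterm : ∀ a, 0 ≤ w a * y a ^ 2 := fun a => by
    by_cases hy : y a = 0
    · simp [hy]
    · exact (mul_pos (hw a hy) (sq_pos_of_ne_zero hy)).le
  have hzero := (Finset.sum_eq_zero_iff_of_nonneg fun a _ => hterm a).1
    (le_antisymm h (Finset.sum_nonneg fun a _ => hterm a))
  funext a
  by_contra hy
  exact (mul_pos (hw a hy) (sq_pos_of_ne_zero hy)).ne' (hzero a (mem_univ a))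

section FinCounting

variable {k : ℕ} {α : Type*} [LinearOrder α] {f : Fin k → α}

lemma Antitone.sub_le_card_filter_lt (hf : Antitone f) {i : Fin k} {t : α} (h : f i < t) :
    k - i ≤ #{j | f j < t} := by
  simpa using card_le_card fun j (hj : j ∈ Ici i) =>
    mem_filter.2 ⟨mem_univ j, (hf (mem_Ici.1 hj)).trans_lt h⟩

lemma Antitone.lt_card_filter_gt (hf : Antitone f) {j : Fin k} {t : α} (h : t < f j) :
    (j : ℕ) < #{l | t < f l} := by
  simpa using card_le_card fun l (hl : l ∈ Iic j) =>
    mem_filter.2 ⟨mem_univ l, h.trans_le (hf (mem_Iic.1 hl))⟩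

lemma Monotone.card_filter_gt_le (hf : Monotone f) (i : Fin k) :
    #{l | f i < f l} ≤ k - 1 - i := by
  simpa using card_le_card fun l (hl : l ∈ ({l | f i < f l} : Finset (Fin k))) =>
    mem_Ioi.2 (hf.reflect_lt (mem_filter.1 hl).2)

lemma Monotone.sub_le_card_filter_ge (hf : Monotone f) (i : Fin k) :
    k - i ≤ #{l | f i ≤ f l} := by
  simpa using card_le_card fun l (hl : l ∈ Ici i) =>
    mem_filter.2 ⟨mem_univ l, hf (mem_Ici.1 hl)⟩

end FinCounting

namespace Matrix.IsHermitian

variable {ι : Type*} [Fintype ι] [DecidableEq ι] {A : Matrix ι ι ℝ} (hA : A.IsHermitian)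

noncomputable def eigenCoords : (ι → ℝ) →ₗ[ℝ] (ι → ℝ) :=
  Matrix.mulVecLin (star (hA.eigenvectorUnitary : Matrix ι ι ℝ))

lemma eigenCoords_injective : Function.Injective hA.eigenCoords := by
  intro x y h
  have := congrArg ((hA.eigenvectorUnitary : Matrix ι ι ℝ) *ᵥ ·) h
  simpa [eigenCoords, mulVec_mulVec] using this

lemma dotProduct_mulVec_eq_eigenCoords (B : Matrix ι ι ℝ) (x : ι → ℝ) :
    x ⬝ᵥ (B *ᵥ x) = hA.eigenCoords x ⬝ᵥ
      ((star (hA.eigenvectorUnitary : Matrix ι ι ℝ) * B * (hA.eigenvectorUnitary : Matrix ι ι ℝ))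
        *ᵥ hA.eigenCoords x) := by
  set U : Matrix ι ι ℝ := ↑hA.eigenvectorUnitary
  have hx : x = U *ᵥ hA.eigenCoords x := by simp [U, eigenCoords, mulVec_mulVec]
  conv_lhs => rw [hx]
  rw [← mulVec_mulVec, ← mulVec_mulVec, dotProduct_comm, dotProduct_mulVec, ← mulVec_transpose,
    dotProduct_comm, star_eq_conjTranspose, conjTranspose_eq_transpose_of_trivial]

lemma dotProduct_self_eq_sum (x : ι → ℝ) : x ⬝ᵥ x = ∑ a, hA.eigenCoords x a ^ 2 := by
  simpa [sq, dotProduct] using hA.dotProduct_mulVec_eq_eigenCoords 1 x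

lemma dotProduct_mulVec_self_eq_sum (x : ι → ℝ) :
    x ⬝ᵥ (A *ᵥ x) = ∑ a, hA.eigenvalues a * hA.eigenCoords x a ^ 2 := by
  rw [hA.dotProduct_mulVec_eq_eigenCoords, ← Unitary.conjStarAlgAut_star_apply (S := ℝ),
    conjStarAlgAut_star_eigenvectorUnitary]
  simp [dotProduct, mulVec_diagonal, sq, mul_left_comm]

lemma card_eigenvalues_lt_add_finrank_le (t : ℝ) (V : Submodule ℝ (ι → ℝ))
    (hV : ∀ x ∈ V, t * (x ⬝ᵥ x) ≤ x ⬝ᵥ (A *ᵥ x)) :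
    #{a | hA.eigenvalues a < t} + Module.finrank ℝ V ≤ Fintype.card ι := by
  refine card_add_finrank_le_of_forall_eq_zero hA.eigenCoords _ V fun x hx hS => ?_
  refine hA.eigenCoords_injective (?_ : hA.eigenCoords x = hA.eigenCoords 0)
  rw [map_zero]
  refine eq_zero_of_sum_mul_sq_nonpos (w := fun a => t - hA.eigenvalues a) (fun a ha => ?_) ?_
  · by_contra h
    exact ha (hS a (by simpa using h))
  · have := hV x hx
    rw [hA.dotProduct_self_eq_sum, hA.dotProduct_mulVec_self_eq_sum, Finset.mul_sum] at this
    simpa [sub_mul] using this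

lemma card_lt_eigenvalues_add_finrank_le (t : ℝ) (V : Submodule ℝ (ι → ℝ))
    (hV : ∀ x ∈ V, x ⬝ᵥ (A *ᵥ x) ≤ t * (x ⬝ᵥ x)) :
    #{a | t < hA.eigenvalues a} + Module.finrank ℝ V ≤ Fintype.card ι := by
  refine card_add_finrank_le_of_forall_eq_zero hA.eigenCoords _ V fun x hx hS => ?_
  refine hA.eigenCoords_injective (?_ : hA.eigenCoords x = hA.eigenCoords 0)
  rw [map_zero]
  refine eq_zero_of_sum_mul_sq_nonpos (w := fun a => hA.eigenvalues a - t) (fun a ha => ?_) ?_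
  · by_contra h
    exact ha (hS a (by simpa using h))
  · have := hV x hx
    rw [hA.dotProduct_self_eq_sum, hA.dotProduct_mulVec_self_eq_sum, Finset.mul_sum] at this
    simpa [sub_mul] using this

lemma card_filter_eigenvalues {κ : Type*} [Fintype κ] {m : ℕ} {μ : κ → ℝ}
    (h : A.charpoly.roots = Multiset.replicate m 0 + univ.val.map μ)
    (P : ℝ → Prop) [DecidablePred P] :
    #{a | P (hA.eigenvalues a)} = (if P 0 then m else 0) + #{j | P (μ j)} := by
  have hroots : univ.val.map hA.eigenvalues = Multiset.replicate m 0 + univ.val.map μ := by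
    rw [← h, hA.roots_charpoly_eq_eigenvalues, RCLike.ofReal_real_eq_id, Function.id_comp]
  rw [Finset.card_def, Finset.filter_val,
    ← Multiset.countP_map, hroots, Multiset.countP_add, Multiset.countP_map]
  congr 1
  split_ifs with hP
  · rw [Multiset.countP_eq_card.2 fun a ha => (Multiset.eq_of_mem_replicate ha).symm ▸ hP,
      Multiset.card_replicate]
  · exact Multiset.countP_eq_zero.2 fun a ha => (Multiset.eq_of_mem_replicate ha).symm ▸ hP

end Matrix.IsHermitian

lemma dotProduct_self_sigma {ι : Type*} [Fintype ι] {κ : ι → Type*} [∀ i, Fintype (κ i)]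
    (x : (Σ i, κ i) → ℝ) : x ⬝ᵥ x = ∑ i, ∑ m, x ⟨i, m⟩ ^ 2 := by
  simp [dotProduct, Fintype.sum_sigma, sq]

section CliqueSignMatrix

variable {ι : Type*} [DecidableEq ι] (κ : ι → Type*)

/-- `A(G) - I` for the signed complete graph whose negative edges are those inside the cliques
`κ i`. -/
def cliqueSignMatrix : Matrix (Σ i, κ i) (Σ i, κ i) ℝ :=
  of fun p q => if p.1 = q.1 then -1 else 1

lemma isHermitian_cliqueSignMatrix : (cliqueSignMatrix κ).IsHermitian := by
  ext p q
  simp [cliqueSignMatrix, eq_comm]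

variable [Fintype ι] [∀ i, Fintype (κ i)]

def blockSum : ((Σ i, κ i) → ℝ) →ₗ[ℝ] (ι → ℝ) where
  toFun x i := ∑ m, x ⟨i, m⟩
  map_add' x y := by ext i; simp [Finset.sum_add_distrib]
  map_smul' c x := by ext i; simp [Finset.mul_sum]

variable {κ}

lemma cliqueSignMatrix_mulVec (x : (Σ i, κ i) → ℝ) (p : Σ i, κ i) :
    (cliqueSignMatrix κ *ᵥ x) p = ∑ q, x q - 2 * blockSum κ x p.1 := by
  have hsplit : ∀ q : Σ i, κ i, (if p.1 = q.1 then (-1 : ℝ) else 1) * x q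
      = x q - 2 * if p.1 = q.1 then x q else 0 := fun q => by split_ifs <;> ring
  have hblock : ∑ q : Σ i, κ i, (if p.1 = q.1 then x q else 0) = blockSum κ x p.1 := by
    rw [Fintype.sum_sigma, Fintype.sum_eq_single p.1 fun l hl => by simp [Ne.symm hl]]
    simp [blockSum]
  simp only [mulVec, dotProduct, cliqueSignMatrix, of_apply, hsplit, Finset.sum_sub_distrib,
    ← Finset.mul_sum, hblock]

lemma dotProduct_cliqueSignMatrix_mulVec (x : (Σ i, κ i) → ℝ) :
    x ⬝ᵥ (cliqueSignMatrix κ *ᵥ x) = (∑ p, x p) ^ 2 - 2 * ∑ i, blockSum κ x i ^ 2 := by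
  simp only [dotProduct, cliqueSignMatrix_mulVec, mul_sub, Finset.sum_sub_distrib,
    ← Finset.sum_mul, mul_left_comm _ (2 : ℝ), ← Finset.mul_sum, Fintype.sum_sigma]
  simp [blockSum, sq, Finset.sum_mul]

lemma neg_two_mul_le_dotProduct_cliqueSignMatrix_mulVec (r : ℕ) (x : (Σ i, κ i) → ℝ)
    (hx : ∀ i, r < Fintype.card (κ i) → blockSum κ x i = 0) :
    -2 * r * (x ⬝ᵥ x) ≤ x ⬝ᵥ (cliqueSignMatrix κ *ᵥ x) := by
  have hblock : ∀ i, blockSum κ x i ^ 2 ≤ r * ∑ m, x ⟨i, m⟩ ^ 2 := fun i => by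
    by_cases hi : r < Fintype.card (κ i)
    · rw [hx i hi, zero_pow two_ne_zero]
      positivity
    · calc blockSum κ x i ^ 2 ≤ Fintype.card (κ i) * ∑ m, x ⟨i, m⟩ ^ 2 :=
            sq_sum_le_card_mul_sum_sq
        _ ≤ r * ∑ m, x ⟨i, m⟩ ^ 2 := by gcongr; exact_mod_cast not_lt.1 hi
  rw [dotProduct_cliqueSignMatrix_mulVec, dotProduct_self_sigma, mul_assoc, Finset.mul_sum]
  nlinarith [Finset.sum_le_sum fun i (_ : i ∈ univ) => hblock i, sq_nonneg (∑ p, x p)]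

lemma dotProduct_cliqueSignMatrix_mulVec_le_neg_two_mul (r : ℕ) (c : ι → ℝ)
    (hc : ∀ i, c i ≠ 0 → r ≤ Fintype.card (κ i)) (hsum : ∑ p : Σ i, κ i, c p.1 = 0) :
    (c ∘ Sigma.fst) ⬝ᵥ (cliqueSignMatrix κ *ᵥ (c ∘ Sigma.fst)) ≤
      -2 * r * ((c ∘ Sigma.fst : (Σ i, κ i) → ℝ) ⬝ᵥ (c ∘ Sigma.fst)) := by
  have hterm : ∀ i, r * (Fintype.card (κ i) * c i ^ 2) ≤ (Fintype.card (κ i) * c i) ^ 2 :=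
    fun i => by
      by_cases hci : c i = 0
      · simp [hci]
      · calc r * (Fintype.card (κ i) * c i ^ 2)
            ≤ Fintype.card (κ i) * (Fintype.card (κ i) * c i ^ 2) := by
              gcongr; exact_mod_cast hc i hci
          _ = (Fintype.card (κ i) * c i) ^ 2 := by ring
  have hsum_le := Finset.sum_le_sum fun i (_ : i ∈ univ) => hterm i
  rw [← Finset.mul_sum] at hsum_le
  rw [dotProduct_cliqueSignMatrix_mulVec, dotProduct_self_sigma]
  simp only [Function.comp_apply, hsum, blockSum, LinearMap.coe_mk, AddHom.coe_mk,
    Finset.sum_const, Finset.card_univ, nsmul_eq_mul]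
  linarith

end CliqueSignMatrix

section CliqueSignMatrixEigenvalues

variable {ι : Type*} [Fintype ι] [DecidableEq ι] {κ : ι → Type*} [∀ i, Fintype (κ i)]
  [∀ i, DecidableEq (κ i)]

lemma card_eigenvalues_cliqueSignMatrix_lt_le (r : ℕ) :
    #{a | (isHermitian_cliqueSignMatrix κ).eigenvalues a < -2 * (r : ℝ)} ≤
      #{i | r < Fintype.card (κ i)} := by
  set f := LinearMap.funLeft ℝ ℝ (Subtype.val : {i // r < Fintype.card (κ i)} → ι) ∘ₗ blockSum κ
  have hV := (isHermitian_cliqueSignMatrix κ).card_eigenvalues_lt_add_finrank_le (-2 * r)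
    (LinearMap.ker f) fun x hx => neg_two_mul_le_dotProduct_cliqueSignMatrix_mulVec r x
      fun i hi => congrFun (LinearMap.mem_ker.1 hx) ⟨i, hi⟩
  have hker := f.finrank_sub_finrank_le_finrank_ker
  simp only [Module.finrank_fintype_fun_eq_card, Fintype.card_subtype] at hker
  omega

lemma card_lt_eigenvalues_cliqueSignMatrix_add_card_le [∀ i, Nonempty (κ i)] (r : ℕ) :
    #{a | -2 * (r : ℝ) < (isHermitian_cliqueSignMatrix κ).eigenvalues a} +
      #{i | r ≤ Fintype.card (κ i)} ≤ Fintype.card (Σ i, κ i) + 1 := by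
  set φ := LinearMap.funLeft ℝ ℝ (Sigma.fst : (Σ i, κ i) → ι)
  have hφ : Function.Injective φ := LinearMap.funLeft_injective_of_surjective _ _ _
    fun i => ⟨⟨i, Classical.arbitrary _⟩, rfl⟩
  set ψ := (LinearMap.funLeft ℝ ℝ (Subtype.val : {i // Fintype.card (κ i) < r} → ι)).prod
    ((∑ p, LinearMap.proj p) ∘ₗ φ)
  set V := LinearMap.range (φ ∘ₗ (LinearMap.ker ψ).subtype)
  have hVdim : Module.finrank ℝ V = Module.finrank ℝ (LinearMap.ker ψ) :=
    LinearMap.finrank_range_of_inj (hφ.comp Subtype.val_injective)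
  have hV := (isHermitian_cliqueSignMatrix κ).card_lt_eigenvalues_add_finrank_le (-2 * r) V
    fun x hx => by
      obtain ⟨⟨c, hc⟩, rfl⟩ := LinearMap.mem_range.1 hx
      have hc := LinearMap.mem_ker.1 hc
      refine dotProduct_cliqueSignMatrix_mulVec_le_neg_two_mul r c (fun i hi => ?_) ?_
      · by_contra hlt
        exact hi (congrFun (congrArg Prod.fst hc) ⟨i, not_le.1 hlt⟩)
      · simpa [ψ, φ] using congrArg Prod.snd hc
  have hker := ψ.finrank_sub_finrank_le_finrank_ker
  have hsplit := Finset.card_filter_add_card_filter_not (s := univ)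
    fun i => r ≤ Fintype.card (κ i)
  simp only [Module.finrank_prod, Module.finrank_fintype_fun_eq_card, Fintype.card_subtype,
    Module.finrank_self, not_le, Finset.card_univ] at hker hsplit
  omega

end CliqueSignMatrixEigenvalues

theorem stmt_16_general (k : ℕ) (n : Fin k → ℕ) (hn : ∀ i, 1 ≤ n i)
    (hmono : Monotone n)
    (M : Matrix ((i : Fin k) × Fin (n i)) ((i : Fin k) × Fin (n i)) ℝ)
    (hM : M = Matrix.of fun p q => if p.1 = q.1 then -1 else 1)
    (lam : Fin k → ℝ) (hlam : Antitone lam)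
    (hroots : M.charpoly.roots =
      Multiset.replicate ((∑ i, n i) - k) 0 +
        (Finset.univ.val : Multiset (Fin k)).map lam) :
    (∀ i : Fin k, -2 * (n i : ℝ) ≤ lam i) ∧
    (∀ i j : Fin k, (i : ℕ) + 1 = (j : ℕ) → lam j ≤ -2 * (n i : ℝ)) := by
  have hcount := (isHermitian_cliqueSignMatrix fun i => Fin (n i)).card_filter_eigenvalues
    (hM ▸ hroots)
  refine ⟨fun i => ?_, fun i j hij => ?_⟩
  · by_contra! hlt
    have hbelow := card_eigenvalues_cliqueSignMatrix_lt_le (κ := fun i => Fin (n i)) (n i)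
    rw [hcount (· < -2 * (n i : ℝ))] at hbelow
    simp only [Fintype.card_fin] at hbelow
    have hlam_below := hlam.sub_le_card_filter_lt hlt
    have hn_above := hmono.card_filter_gt_le i
    omega
  · by_contra! hlt
    have : ∀ l, Nonempty (Fin (n l)) := fun l => ⟨⟨0, hn l⟩⟩
    have hneg : -2 * (n i : ℝ) < 0 := by
      have : (1 : ℝ) ≤ n i := by exact_mod_cast hn i
      linarith
    have habove := card_lt_eigenvalues_cliqueSignMatrix_add_card_le (κ := fun i => Fin (n i)) (n i)
    rw [hcount (-2 * (n i : ℝ) < ·), if_pos hneg] at habove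
    simp only [Fintype.card_fin, Fintype.card_sigma] at habove
    have hlam_above := hlam.lt_card_filter_gt hlt
    have hn_above := hmono.sub_le_card_filter_ge i
    have hk : k ≤ ∑ l, n l := by simpa using Finset.sum_le_sum fun l (_ : l ∈ univ) => hn l
    omega

/-- Interlacing for the nonzero eigenvalues `λ₁ ≥ … ≥ λ_k` of `A(G) - I` where `G` is
the complete graph on `n = n₁ + … + n_k` vertices with negative cliques of orders
`n₁ ≤ … ≤ n_k` covering the vertex set:
`λ₁ ≥ -2n₁ ≥ λ₂ ≥ -2n₂ ≥ … ≥ λ_k ≥ -2n_k`. -/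
theorem stmt_16 (k : ℕ) (hk : 1 ≤ k) (n : Fin k → ℕ) (hn : ∀ i, 1 ≤ n i)
    (hmono : Monotone n)
    (M : Matrix ((i : Fin k) × Fin (n i)) ((i : Fin k) × Fin (n i)) ℝ)
    (hM : M = Matrix.of fun p q => if p.1 = q.1 then -1 else 1)
    (lam : Fin k → ℝ) (hlam : Antitone lam) (hne : ∀ i, lam i ≠ 0)
    (hroots : M.charpoly.roots =
      Multiset.replicate ((∑ i, n i) - k) 0 +
        (Finset.univ.val : Multiset (Fin k)).map lam) :
    (∀ i : Fin k, -2 * (n i : ℝ) ≤ lam i) ∧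
    (∀ i j : Fin k, (i : ℕ) + 1 = (j : ℕ) → lam j ≤ -2 * (n i : ℝ)) :=
  stmt_16_general k n hn hmono M hM lam hlam hroots
end

section
/- Let n̄_1 < n̄_2 < ... < n̄_t be distinct positive reals, m_1, ..., m_t positive integers, and p(λ) = Σ_{i=1}^t m_i n̄_i / (-2n̄_i - λ). Then the polynomial equation 1 + p(λ) = 0 has exactly t real roots λ*_1 > λ*_2 > ... > λ*_t, and they strictly interlace: λ*_1 > -2n̄_1 > λ*_2 > -2n̄_2 > ... > λ*_{t-1} > -2n̄_{t-1} > λ*_t > -2n̄_t. -/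
/-!
The secular function `f(x) = 1 + ∑ cᵢ / (dᵢ - x)` with weights `cᵢ > 0` is strictly increasing
and continuous on every interval free of poles. It tends to `-∞` just right of each pole, to `+∞`
just left of each pole, and to `1` at `+∞`, and it is positive left of all poles. Hence it has
exactly one zero in the gap between each pole and the next larger one (or `+∞`), and no other
zeros. Here `dᵢ = -2n̄ᵢ` and `cᵢ = mᵢn̄ᵢ`.
-/

open Filter Topology Set

lemma div_sub_lt_div_sub {a b x y : ℝ} (ha : 0 < a) (hxy : x < y) (hb : b ∉ Icc x y) :
    a / (b - x) < a / (b - y) := by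
  rcases lt_or_ge b x with hbx | hxb
  · have h := one_div_lt_one_div_of_neg_of_lt (sub_neg.2 hbx) (sub_lt_sub_left hxy b)
    simpa only [mul_one_div] using mul_lt_mul_of_pos_left h ha
  · have hyb : y < b := lt_of_not_ge fun h => hb ⟨hxb, h⟩
    exact div_lt_div_of_pos_left ha (sub_pos.2 hyb) (sub_lt_sub_left hxy b)

noncomputable section

variable {ι : Type*} {c d : ι → ℝ}

def gapAbove (d : ι → ℝ) (k : ι) : Set ℝ := {x | d k < x ∧ ∀ j, d k < d j → x < d j}

lemma pole_notMem_gapAbove (i k : ι) : d i ∉ gapAbove d k :=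
  fun h => (h.2 i h.1).false

lemma ordConnected_gapAbove (k : ι) : (gapAbove d k).OrdConnected :=
  ⟨fun _ hx _ hy _ hz => ⟨hx.1.trans_le hz.1, fun j hj => hz.2.trans_lt (hy.2 j hj)⟩⟩

variable [Fintype ι]

lemma gapAbove_mem_nhdsGT (k : ι) : gapAbove d k ∈ 𝓝[>] d k := by
  have h : ∀ᶠ x in 𝓝 (d k), ∀ j, d k < d j → x < d j := by
    refine eventually_all.2 fun j => ?_
    by_cases hj : d k < d j
    · exact (eventually_lt_nhds hj).mono fun _ h _ => h
    · exact .of_forall fun _ h => absurd h hj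
  filter_upwards [self_mem_nhdsWithin, nhdsWithin_le_nhds h] with x hkx hx using ⟨hkx, hx⟩

lemma exists_mem_gapAbove {x : ℝ} (hx : ∀ i, x ≠ d i) (h : ∃ i, d i < x) :
    ∃ k, x ∈ gapAbove d k := by
  obtain ⟨k, hk, hmax⟩ := Finset.exists_max_image {i | d i < x} d
    (by simpa [Finset.filter_nonempty_iff] using h)
  refine ⟨k, (Finset.mem_filter.1 hk).2, fun j hj => (hx j).symm.lt_of_le' ?_⟩
  exact le_of_not_gt fun hjx => (hmax j (by simpa using hjx)).not_gt hj

def secular (c d : ι → ℝ) (x : ℝ) : ℝ := 1 + ∑ i, c i / (d i - x)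

lemma secular_pos_of_forall_lt (hc : ∀ i, 0 ≤ c i) {x : ℝ} (hx : ∀ i, x < d i) :
    0 < secular c d x :=
  add_pos_of_pos_of_nonneg one_pos <|
    Finset.sum_nonneg fun i _ => div_nonneg (hc i) (sub_pos.2 (hx i)).le

lemma secular_lt_secular [Nonempty ι] (hc : ∀ i, 0 < c i) {x y : ℝ} (hxy : x < y)
    (hd : ∀ i, d i ∉ Icc x y) : secular c d x < secular c d y :=
  add_lt_add_right (Finset.sum_lt_sum_of_nonempty Finset.univ_nonempty fun i _ =>
    div_sub_lt_div_sub (hc i) hxy (hd i)) 1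

lemma strictMonoOn_secular [Nonempty ι] (hc : ∀ i, 0 < c i) {s : Set ℝ} (hs : s.OrdConnected)
    (hd : ∀ i, d i ∉ s) : StrictMonoOn (secular c d) s :=
  fun _ hx _ hy hxy => secular_lt_secular hc hxy fun i hi => hd i (hs.out hx hy hi)

lemma continuousOn_secular {s : Set ℝ} (hd : ∀ i, d i ∉ s) : ContinuousOn (secular c d) s :=
  continuousOn_const.add <| continuousOn_finsetSum _ fun i _ =>
    continuousOn_const.div (continuousOn_const.sub continuousOn_id)
      fun _ hx => sub_ne_zero.2 fun h => hd i (h ▸ hx)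

lemma tendsto_secular_atTop : Tendsto (secular c d) atTop (𝓝 1) := by
  have h : Tendsto (secular c d) atTop (𝓝 (1 + ∑ _i : ι, 0)) :=
    tendsto_const_nhds.add <| tendsto_finsetSum _ fun i _ => tendsto_const_nhds.div_atBot <|
      tendsto_atBot_add_const_left _ _ tendsto_neg_atTop_atBot
  rwa [Finset.sum_const_zero, add_zero] at h

lemma secular_eq_add_pole (k : ι) (x : ℝ) :
    secular c d x = (1 + ∑ i with d i ≠ d k, c i / (d i - x)) +
      (∑ i with d i = d k, c i) / (d k - x) := by
  rw [secular, Finset.sum_div, ← Finset.sum_filter_not_add_sum_filter _ (fun i => d i = d k),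
    add_assoc]
  congr 2
  exact Finset.sum_congr rfl fun i hi => by rw [(Finset.mem_filter.1 hi).2]

lemma tendsto_secular_sub_pole (k : ι) :
    Tendsto (fun x => 1 + ∑ i with d i ≠ d k, c i / (d i - x)) (𝓝 (d k))
      (𝓝 (1 + ∑ i with d i ≠ d k, c i / (d i - d k))) :=
  tendsto_const_nhds.add <| tendsto_finsetSum _ fun _ hi =>
    tendsto_const_nhds.div (tendsto_const_nhds.sub tendsto_id)
      (sub_ne_zero.2 (Finset.mem_filter.1 hi).2)

lemma sum_pole_pos (hc : ∀ i, 0 < c i) (k : ι) : 0 < ∑ i with d i = d k, c i :=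
  Finset.sum_pos (fun i _ => hc i) ⟨k, Finset.mem_filter.2 ⟨Finset.mem_univ k, rfl⟩⟩

lemma tendsto_secular_nhdsGT (hc : ∀ i, 0 < c i) (k : ι) :
    Tendsto (secular c d) (𝓝[>] d k) atBot := by
  have hsub : Tendsto (fun x => d k - x) (𝓝[>] d k) (𝓝[<] 0) := by
    have h : ContinuousWithinAt (fun x => d k - x) (Ioi (d k)) (d k) := by fun_prop
    simpa using h.tendsto_nhdsWithin (t := Iio 0) fun x hx => sub_neg.2 hx
  have hpole := (tendsto_inv_nhdsLT_zero.comp hsub).const_mul_atBot (sum_pole_pos (d := d) hc k)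
  refine (((tendsto_secular_sub_pole (c := c) k).mono_left nhdsWithin_le_nhds).add_atBot
    hpole).congr fun x => ?_
  simp [secular_eq_add_pole k x, div_eq_mul_inv]

lemma tendsto_secular_nhdsLT (hc : ∀ i, 0 < c i) (k : ι) :
    Tendsto (secular c d) (𝓝[<] d k) atTop := by
  have hsub : Tendsto (fun x => d k - x) (𝓝[<] d k) (𝓝[>] 0) := by
    have h : ContinuousWithinAt (fun x => d k - x) (Iio (d k)) (d k) := by fun_prop
    simpa using h.tendsto_nhdsWithin (t := Ioi 0) fun x hx => sub_pos.2 hx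
  have hpole := (tendsto_inv_nhdsGT_zero.comp hsub).const_mul_atTop (sum_pole_pos (d := d) hc k)
  refine (((tendsto_secular_sub_pole (c := c) k).mono_left nhdsWithin_le_nhds).add_atTop
    hpole).congr fun x => ?_
  simp [secular_eq_add_pole k x, div_eq_mul_inv]

lemma exists_secular_neg_mem_gapAbove (hc : ∀ i, 0 < c i) (k : ι) :
    ∃ x ∈ gapAbove d k, secular c d x < 0 :=
  (((tendsto_secular_nhdsGT hc k).eventually (eventually_lt_atBot 0)).and
    (gapAbove_mem_nhdsGT k)).exists.imp fun _ h => ⟨h.2, h.1⟩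

lemma exists_secular_pos_mem_gapAbove (hc : ∀ i, 0 < c i) (k : ι) :
    ∃ x ∈ gapAbove d k, 0 < secular c d x := by
  by_cases h : ∃ j, d k < d j
  · obtain ⟨j, hj, hmin⟩ := Finset.exists_min_image {j | d k < d j} d
      (by simpa [Finset.filter_nonempty_iff] using h)
    have hkj : d k < d j := (Finset.mem_filter.1 hj).2
    have hgap : gapAbove d k ∈ 𝓝[<] d j := by
      filter_upwards [self_mem_nhdsWithin, nhdsWithin_le_nhds (eventually_gt_nhds hkj)]
        with x hxj hkx
      exact ⟨hkx, fun i hi => hxj.trans_le (hmin i (by simpa using hi))⟩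
    exact (((tendsto_secular_nhdsLT hc j).eventually (eventually_gt_atTop 0)).and
      hgap).exists.imp fun _ h => ⟨h.2, h.1⟩
  · push Not at h
    have hgap : gapAbove d k ∈ atTop := by
      filter_upwards [eventually_gt_atTop (d k)] with x hkx
      exact ⟨hkx, fun j hj => absurd hj (h j).not_gt⟩
    exact ((tendsto_secular_atTop.eventually (eventually_gt_nhds one_pos)).and
      hgap).exists.imp fun _ h => ⟨h.2, h.1⟩

lemma existsUnique_secular_eq_zero_mem_gapAbove (hc : ∀ i, 0 < c i) (k : ι) :
    ∃! x, x ∈ gapAbove d k ∧ secular c d x = 0 := by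
  have : Nonempty ι := ⟨k⟩
  obtain ⟨a, ha, hfa⟩ := exists_secular_neg_mem_gapAbove hc k
  obtain ⟨b, hb, hfb⟩ := exists_secular_pos_mem_gapAbove hc k
  have hpoles : ∀ i, d i ∉ gapAbove d k := fun i => pole_notMem_gapAbove i k
  obtain ⟨x, hx, hfx⟩ := (ordConnected_gapAbove k).isPreconnected.intermediate_value ha hb
    (continuousOn_secular hpoles) ⟨hfa.le, hfb.le⟩
  exact ⟨x, ⟨hx, hfx⟩, fun y hy => (strictMonoOn_secular hc (ordConnected_gapAbove k)
    hpoles).injOn hy.1 hx (hy.2.trans hfx.symm)⟩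

end

theorem stmt_17_general (t : ℕ) (nb : Fin t → ℝ) (hpos : ∀ i, 0 < nb i)
    (hmono : StrictMono nb) (m : Fin t → ℕ) (hm : ∀ i, 0 < m i)
    (p : ℝ → ℝ) (hp : p = fun lam => ∑ i, (m i : ℝ) * nb i / (-2 * nb i - lam)) :
    ∃ ls : Fin t → ℝ,
      StrictAnti ls ∧
      (∀ i, 1 + p (ls i) = 0) ∧
      (∀ x : ℝ, (∀ i, x ≠ -2 * nb i) → 1 + p x = 0 → ∃ i, x = ls i) ∧
      (∀ i : Fin t, -2 * nb i < ls i) ∧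
      (∀ i j : Fin t, (i : ℕ) + 1 = (j : ℕ) → ls j < -2 * nb i) := by
  set c : Fin t → ℝ := fun i => (m i : ℝ) * nb i
  set d : Fin t → ℝ := fun i => -2 * nb i
  have hc : ∀ i, 0 < c i := fun i => mul_pos (Nat.cast_pos.2 (hm i)) (hpos i)
  have hd : StrictAnti d := fun i j hij => by simp only [d]; linarith [hmono hij]
  have hp' : ∀ x, 1 + p x = secular c d x := fun x => by rw [hp]; rfl
  have hroot := existsUnique_secular_eq_zero_mem_gapAbove (d := d) hc
  choose ls hls using fun k => (hroot k).exists
  refine ⟨ls, fun i j hij => ((hls j).1.2 i (hd hij)).trans (hls i).1.1,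
    fun i => (hp' _).trans (hls i).2, fun x hx hfx => ?_, fun i => (hls i).1.1,
    fun i j hij => (hls j).1.2 i (hd (Fin.lt_def.2 (by omega)))⟩
  rw [hp'] at hfx
  have hbelow : ∃ i, d i < x := by
    by_contra! h
    exact (secular_pos_of_forall_lt (fun i => (hc i).le)
      fun i => (h i).lt_of_ne (hx i)).ne' hfx
  obtain ⟨k, hk⟩ := exists_mem_gapAbove hx hbelow
  exact ⟨k, (hroot k).unique ⟨hk, hfx⟩ (hls k)⟩

/-- Let `n̄₁ < … < n̄_t` be distinct positive reals, `m₁, …, m_t` positive integers,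
and `p(λ) = Σᵢ mᵢ n̄ᵢ / (-2n̄ᵢ - λ)`. The equation `1 + p(λ) = 0` has exactly `t`
real roots `λ*₁ > … > λ*_t`, and they strictly interlace:
`λ*₁ > -2n̄₁ > λ*₂ > -2n̄₂ > … > λ*_{t-1} > -2n̄_{t-1} > λ*_t > -2n̄_t`. -/
theorem stmt_17 (t : ℕ) (ht : 1 ≤ t) (nb : Fin t → ℝ) (hpos : ∀ i, 0 < nb i)
    (hmono : StrictMono nb) (m : Fin t → ℕ) (hm : ∀ i, 0 < m i)
    (p : ℝ → ℝ) (hp : p = fun lam => ∑ i, (m i : ℝ) * nb i / (-2 * nb i - lam)) :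
    ∃ ls : Fin t → ℝ,
      StrictAnti ls ∧
      (∀ i, 1 + p (ls i) = 0) ∧
      (∀ x : ℝ, (∀ i, x ≠ -2 * nb i) → 1 + p x = 0 → ∃ i, x = ls i) ∧
      (∀ i : Fin t, -2 * nb i < ls i) ∧
      (∀ i j : Fin t, (i : ℕ) + 1 = (j : ℕ) → ls j < -2 * nb i) :=
  stmt_17_general t nb hpos hmono m hm p hp
end

section
/- Let G be an r-regular star block graph with k blocks sharing one cut-vertex, with l negative blocks and k-l positive blocks. Then 1 is an eigenvalue of A(G) with multiplicity at least (r-2)(l-1), 2-r with multiplicity at least l-1, -1 with multiplicity at least (r-2)(k-l-1), and r-2 with multiplicity at least k-l-1. -/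
/-!
Inside a block `b` with sign `σ`, the difference of the unit vectors of two non-cut vertices is
an eigenvector for `-σ`: the two corresponding columns of `A(G)` differ only in those two
entries. The difference of the indicator vectors of the non-cut vertices of two blocks of the
same sign `σ` is an eigenvector for `σ (r - 2)`: both blocks see the cut vertex with the same
weight `σ (r - 1)`, which cancels. Both families are linearly independent, since each member has
a coordinate at which it is the only nonzero one, and the geometric multiplicity of an
eigenvalue bounds its algebraic multiplicity.
-/

/-- Edge sign of block `b`: `-1` for the first `l` (negative) blocks, `+1` otherwise. -/
def blockSign (k l : ℕ) (b : Fin k) : ℝ := if (b : ℕ) < l then -1 else 1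

/-- Adjacency matrix of the `r`-regular star block graph with `k` blocks sharing one
cut-vertex, the first `l` blocks being negative cliques and the rest positive. -/
def starBlockAdj (k l r : ℕ) :
    Matrix (Unit ⊕ Fin k × Fin (r - 1)) (Unit ⊕ Fin k × Fin (r - 1)) ℝ :=
  fun p q =>
    match p, q with
    | .inl _, .inl _ => 0
    | .inl _, .inr (b, _) => blockSign k l b
    | .inr (b, _), .inl _ => blockSign k l b
    | .inr (b, a), .inr (b', a') =>
        if b = b' then (if a = a' then 0 else blockSign k l b) else 0

open Matrix Module Finset

theorem LinearIndependent.of_apply_eq_ite {R ι V : Type*} [CommRing R] [DecidableEq ι]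
    (v : ι → V → R) (x : ι → V) (h : ∀ i j, v i (x j) = if i = j then 1 else 0) :
    LinearIndependent R v := by
  rw [linearIndependent_iff']
  intro s g hg j hj
  simpa [Finset.sum_apply, h, hj] using congrFun hg (x j)

theorem Matrix.card_le_rootMultiplicity_charpoly {K n ι : Type*} [Field K] [Fintype n]
    [DecidableEq n] [Fintype ι] (A : Matrix n n K) (μ : K) (v : ι → n → K)
    (hv : ∀ i, A *ᵥ v i = μ • v i) (hli : LinearIndependent K v) :
    Fintype.card ι ≤ A.charpoly.rootMultiplicity μ := by
  let E := Module.End.eigenspace (toLin' A) μ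
  have hmem (i : ι) : v i ∈ E := by
    rw [Module.End.mem_eigenspace_iff, Matrix.toLin'_apply, hv]
  have hliE : LinearIndependent K fun i => (⟨v i, hmem i⟩ : E) := .of_comp E.subtype hli
  calc Fintype.card ι ≤ finrank K E := hliE.fintype_card_le_finrank
    _ ≤ A.toLin'.charpoly.rootMultiplicity μ := LinearMap.finrank_eigenspace_le _ _
    _ = A.charpoly.rootMultiplicity μ := by rw [charpoly_toLin']

namespace StarBlock

variable {k l r : ℕ}

def blockIndicator (b : Fin k) : Unit ⊕ Fin k × Fin (r - 1) → ℝ :=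
  Sum.elim 0 fun q => if q.1 = b then 1 else 0

theorem mulVec_single_sub_single (b : Fin k) {a a' : Fin (r - 1)} (h : a ≠ a') :
    starBlockAdj k l r *ᵥ (Pi.single (.inr (b, a)) 1 - Pi.single (.inr (b, a')) 1) =
      (-blockSign k l b) • (Pi.single (.inr (b, a)) 1 - Pi.single (.inr (b, a')) 1) := by
  rw [mulVec_sub, mulVec_single_one, mulVec_single_one]
  ext (_ | ⟨c, a''⟩)
  · simp [starBlockAdj]
  · by_cases hc : c = b
    · subst hc
      by_cases h1 : a'' = a <;> by_cases h2 : a'' = a' <;>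
        simp_all [starBlockAdj, Pi.single_apply, eq_comm]
    · simp [starBlockAdj, hc]

theorem mulVec_blockIndicator (b : Fin k) :
    starBlockAdj k l r *ᵥ blockIndicator b =
      Sum.elim (fun _ => ((r - 1 : ℕ) : ℝ) * blockSign k l b)
        fun q => if q.1 = b then ((r - 2 : ℕ) : ℝ) * blockSign k l b else 0 := by
  ext (_ | ⟨c, a⟩)
  · simp [mulVec, dotProduct, Fintype.sum_sum_type, Fintype.sum_prod_type, blockIndicator,
      starBlockAdj]
  · simp only [mulVec, dotProduct, starBlockAdj, blockIndicator, Fintype.sum_sum_type,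
      Sum.elim_inl, Pi.zero_apply, mul_zero, sum_const_zero, Sum.elim_inr, mul_ite, mul_one,
      Fintype.sum_prod_type, sum_ite_irrel, sum_ite_eq', mem_univ, ↓reduceIte, zero_add]
    split_ifs with hc
    · subst hc
      rw [Finset.sum_ite, Finset.sum_const_zero, zero_add, Finset.sum_const, Finset.filter_ne,
        Finset.card_erase_of_mem (Finset.mem_univ a), Finset.card_univ, Fintype.card_fin,
        nsmul_eq_mul, Nat.sub_sub]
    · rfl

theorem mulVec_blockIndicator_sub {b c : Fin k} (hbc : b ≠ c)
    (hsign : blockSign k l b = blockSign k l c) :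
    starBlockAdj k l r *ᵥ (blockIndicator b - blockIndicator c) =
      (blockSign k l b * ((r - 2 : ℕ) : ℝ)) • (blockIndicator b - blockIndicator c) := by
  rw [mulVec_sub, mulVec_blockIndicator, mulVec_blockIndicator]
  ext (_ | ⟨d, a⟩)
  · simp [blockIndicator, hsign]
  · by_cases hb : d = b
    · subst hb
      simp [blockIndicator, hbc, mul_comm]
    · by_cases hc : d = c
      · subst hc
        simp [blockIndicator, hb, hsign, mul_comm]
      · simp [blockIndicator, hb, hc]

theorem card_mul_le_rootMultiplicity_neg (S : Finset (Fin k)) (ε : ℝ)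
    (hS : ∀ b ∈ S, blockSign k l b = ε) (hr : 2 ≤ r) :
    #S * (r - 2) ≤ (starBlockAdj k l r).charpoly.rootMultiplicity (-ε) := by
  let a₀ : Fin (r - 1) := ⟨0, by omega⟩
  let v (i : S × (univ.erase a₀ : Finset (Fin (r - 1)))) :
      Unit ⊕ Fin k × Fin (r - 1) → ℝ :=
    Pi.single (.inr (i.1, i.2)) 1 - Pi.single (.inr (i.1, a₀)) 1
  have hv (i) : starBlockAdj k l r *ᵥ v i = -ε • v i := by
    rw [← hS i.1 i.1.2]
    exact mulVec_single_sub_single _ (Finset.ne_of_mem_erase i.2.2)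
  have hli : LinearIndependent ℝ v := by
    refine .of_apply_eq_ite v (fun i => .inr (i.1, i.2)) fun i j => ?_
    simp [v, Pi.single_apply, Finset.ne_of_mem_erase j.2.2, Prod.ext_iff, eq_comm]
  have := card_le_rootMultiplicity_charpoly _ _ v hv hli
  rwa [Fintype.card_prod, Fintype.card_coe, Fintype.card_coe, card_erase_of_mem (mem_univ _),
    card_univ, Fintype.card_fin, Nat.sub_sub] at this

theorem card_sub_one_le_rootMultiplicity (S : Finset (Fin k)) (ε : ℝ)
    (hS : ∀ b ∈ S, blockSign k l b = ε) (hr : 2 ≤ r) :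
    #S - 1 ≤ (starBlockAdj k l r).charpoly.rootMultiplicity (ε * ((r : ℝ) - 2)) := by
  obtain rfl | ⟨c, hc⟩ := S.eq_empty_or_nonempty
  · simp
  let a₀ : Fin (r - 1) := ⟨0, by omega⟩
  let v (b : S.erase c) : Unit ⊕ Fin k × Fin (r - 1) → ℝ :=
    blockIndicator b - blockIndicator c
  have hv (b) : starBlockAdj k l r *ᵥ v b = (ε * ((r : ℝ) - 2)) • v b := by
    have hb := Finset.mem_of_mem_erase b.2
    have hcast : ((r - 2 : ℕ) : ℝ) = r - 2 := by rw [Nat.cast_sub hr, Nat.cast_ofNat]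
    rw [← hS b hb, ← hcast]
    exact mulVec_blockIndicator_sub (Finset.ne_of_mem_erase b.2) (by rw [hS b hb, hS c hc])
  have hli : LinearIndependent ℝ v := by
    refine .of_apply_eq_ite v (fun b => .inr (b, a₀)) fun b b' => ?_
    simp [v, blockIndicator, Finset.ne_of_mem_erase b'.2, eq_comm (a := b')]
  have := card_le_rootMultiplicity_charpoly _ _ v hv hli
  rwa [Fintype.card_coe, Finset.card_erase_of_mem hc] at this

end StarBlock

theorem stmt_19_general (k l r : ℕ) (hl : l ≤ k) (hr : 2 ≤ r) :
    (r - 2) * (l - 1) ≤ (starBlockAdj k l r).charpoly.rootMultiplicity 1 ∧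
    l - 1 ≤ (starBlockAdj k l r).charpoly.rootMultiplicity (2 - (r : ℝ)) ∧
    (r - 2) * (k - l - 1) ≤ (starBlockAdj k l r).charpoly.rootMultiplicity (-1) ∧
    k - l - 1 ≤ (starBlockAdj k l r).charpoly.rootMultiplicity ((r : ℝ) - 2) := by
  let neg : Finset (Fin k) := {b | (b : ℕ) < l}
  have hneg : ∀ b ∈ neg, blockSign k l b = -1 := fun b hb => if_pos (mem_filter.1 hb).2
  have hpos : ∀ b ∈ negᶜ, blockSign k l b = 1 := fun b hb => if_neg (by simpa [neg] using hb)
  have hcard_neg : #neg = l := by simp [neg, Fin.card_filter_val_lt, hl]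
  have hcard_pos : #negᶜ = k - l := by rw [card_compl, Fintype.card_fin, hcard_neg]
  refine ⟨?_, ?_, ?_, ?_⟩
  · calc (r - 2) * (l - 1) ≤ (r - 2) * #neg := by
          rw [hcard_neg]; exact Nat.mul_le_mul_left _ (l.sub_le 1)
      _ ≤ _ := by
        simpa [mul_comm] using StarBlock.card_mul_le_rootMultiplicity_neg neg (-1) hneg hr
  · simpa [hcard_neg] using StarBlock.card_sub_one_le_rootMultiplicity neg (-1) hneg hr
  · calc (r - 2) * (k - l - 1) ≤ (r - 2) * #negᶜ := by
          rw [hcard_pos]; exact Nat.mul_le_mul_left _ ((k - l).sub_le 1)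
      _ ≤ _ := by
        simpa [mul_comm] using StarBlock.card_mul_le_rootMultiplicity_neg negᶜ 1 hpos hr
  · simpa [hcard_pos] using StarBlock.card_sub_one_le_rootMultiplicity negᶜ 1 hpos hr

/-- For the `r`-regular star block graph with `k` blocks (`l` negative, `k - l`
positive), `1` is an eigenvalue of `A(G)` with multiplicity at least `(r-2)(l-1)`,
`2-r` with multiplicity at least `l-1`, `-1` with multiplicity at least
`(r-2)(k-l-1)`, and `r-2` with multiplicity at least `k-l-1`. -/
theorem stmt_19 (k l r : ℕ) (hk : 1 ≤ k) (hl : l ≤ k) (hr : 2 ≤ r) :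
    (r - 2) * (l - 1) ≤ (starBlockAdj k l r).charpoly.rootMultiplicity 1 ∧
    l - 1 ≤ (starBlockAdj k l r).charpoly.rootMultiplicity (2 - (r : ℝ)) ∧
    (r - 2) * (k - l - 1) ≤ (starBlockAdj k l r).charpoly.rootMultiplicity (-1) ∧
    k - l - 1 ≤ (starBlockAdj k l r).charpoly.rootMultiplicity ((r : ℝ) - 2) :=
  stmt_19_general k l r hl hr
end
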